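/- arXiv:1006.2292 — 9 statements merged into one kernel-verified Lean document; each statement's English description precedes it below -/
import Mathlib

section
/- Let a, b ≥ 0 be real numbers and η > 0 satisfy a² + (b − 2η)a + 2ηb ≥ 0 (i.e., the quadratic inequality a² + (b−2η)a + 2ηb ≥ 0 holds). Then there exist constants γ ∈ (0, 1/4) and J > 0, depending only on η (and in fact γ can be chosen as a universal constant and J depending on γ, η), such that whenever a ≤ η and b ≤ γη, one has a ≤ b + J b². -/
/-- Lemma `lem:trinome`: for `a, b ≥ 0` satisfying the quadratic inequality
`a² + (b − 2η)a + 2ηb ≥ 0`, there exist constants `γ ∈ (0, 1/4)` and `J > 0`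
(depending only on `η`) such that `a ≤ η` and `b ≤ γη` imply `a ≤ b + J b²`. -/
theorem stmt_0 (η : ℝ) (hη : 0 < η) :
    ∃ γ J : ℝ, γ ∈ Set.Ioo (0 : ℝ) (1/4) ∧ 0 < J ∧
      ∀ a b : ℝ, 0 ≤ a → 0 ≤ b →
        a ^ 2 + (b - 2 * η) * a + 2 * η * b ≥ 0 →
        a ≤ η → b ≤ γ * η → a ≤ b + J * b ^ 2 := by
  refine ⟨1/8, 4/η, ⟨by norm_num, by norm_num⟩, by positivity, ?_⟩
  intro a b ha hb hQ haη hbγ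
  rcases eq_or_lt_of_le hb with hb0 | hb0
  · have : a = 0 := by nlinarith
    simp [this, ← hb0]
  · by_contra hcon
    push_neg at hcon
    have h1 : b * η + 4 * b ^ 2 < a * η := by
      have h := mul_lt_mul_of_pos_right hcon hη
      have e : (b + 4 / η * b ^ 2) * η = b * η + 4 * b ^ 2 := by
        field_simp
      linarith [e ▸ h]
    nlinarith [mul_nonneg (sub_nonneg.2 haη) (by linarith : (0:ℝ) ≤ a * η - b * η - 4 * b ^ 2),
      mul_pos hb0 hη, sq_nonneg b, mul_pos hb0 hb0,
      mul_nonneg (sub_nonneg.2 haη) hb, mul_pos hη hη]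
end

section
/- Let J' > 0 and define φ(x) = x + J' x². Let φⁿ denote the n-th iterate of φ. Then for every x ≥ 0 with J' n x ≠ 1, one has φⁿ(x) ≤ x · (1 + (J'nx) + (J'nx)² + ⋯ + (J'nx)^{2ⁿ−1}) = x · ((J'nx)^{2ⁿ} − 1)/((J'nx) − 1) when J'nx ≠ 1. -/
open Finset

noncomputable def iterPoly (J' : ℝ) : ℕ → Polynomial ℝ
  | 0 => Polynomial.X
  | (n+1) => iterPoly J' n + Polynomial.C J' * (iterPoly J' n) ^ 2

lemma iterPoly_eval (J' : ℝ) (n : ℕ) (x : ℝ) :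
    (fun y : ℝ => y + J' * y ^ 2)^[n] x = (iterPoly J' n).eval x := by
  induction n with
  | zero => simp [iterPoly]
  | succ n ih =>
      rw [Function.iterate_succ_apply', ih]
      simp [iterPoly]

lemma iterPoly_coeff_zero (J' : ℝ) (n : ℕ) : (iterPoly J' n).coeff 0 = 0 := by
  induction n with
  | zero => simp [iterPoly]
  | succ n ih =>
      simp only [iterPoly, Polynomial.coeff_add, Polynomial.coeff_C_mul, sq,
        Polynomial.mul_coeff_zero, ih]
      ring

lemma iterPoly_coeff_nonneg (J' : ℝ) (hJ' : 0 ≤ J') (n : ℕ) (k : ℕ) :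
    0 ≤ (iterPoly J' n).coeff k := by
  induction n generalizing k with
  | zero =>
      simp only [iterPoly, Polynomial.coeff_X]
      split <;> norm_num
  | succ n ih =>
      simp only [iterPoly, Polynomial.coeff_add, Polynomial.coeff_C_mul]
      rw [sq, Polynomial.coeff_mul]
      have : 0 ≤ ∑ p ∈ Finset.HasAntidiagonal.antidiagonal k,
          (iterPoly J' n).coeff p.1 * (iterPoly J' n).coeff p.2 :=
        Finset.sum_nonneg fun p _ => mul_nonneg (ih p.1) (ih p.2)
      exact add_nonneg (ih k) (mul_nonneg hJ' this)

lemma iterPoly_natDegree (J' : ℝ) (n : ℕ) : (iterPoly J' n).natDegree ≤ 2 ^ n := by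
  induction n with
  | zero => simp [iterPoly]
  | succ n ih =>
      refine le_trans (Polynomial.natDegree_add_le _ _) (max_le ?_ ?_)
      · exact le_trans ih (Nat.pow_le_pow_right (by norm_num) (Nat.le_succ n))
      · refine le_trans (Polynomial.natDegree_mul_le) ?_
        have h2 : (iterPoly J' n ^ 2).natDegree ≤ 2 * 2 ^ n :=
          le_trans (Polynomial.natDegree_pow_le) (by omega)
        simp only [Polynomial.natDegree_C, zero_add]
        calc (iterPoly J' n ^ 2).natDegree ≤ 2 * 2 ^ n := h2
          _ = 2 ^ (n + 1) := by ring

lemma nat_binom_ineq (n m : ℕ) : n ^ (m+1) + (m+1) * n ^ m ≤ (n+1) ^ (m+1) := by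
  have h := add_pow n 1 (m+1)
  simp only [one_pow, mul_one] at h
  rw [h, Finset.sum_range_succ, Finset.sum_range_succ]
  simp [Nat.choose_succ_self_right, Nat.choose_self, mul_comm]
  omega

lemma iterPoly_coeff_le (J' : ℝ) (hJ' : 0 < J') (n : ℕ) (k : ℕ) :
    (iterPoly J' n).coeff (k + 1) ≤ (J' * n) ^ k := by
  induction n generalizing k with
  | zero =>
      simp only [iterPoly, Polynomial.coeff_X, Nat.cast_zero, mul_zero]
      rcases k with _ | k
      · norm_num
      · simp
  | succ n ih =>
      have hc0 := iterPoly_coeff_zero J' n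
      have hcn := iterPoly_coeff_nonneg J' hJ'.le n
      -- the square coefficient
      have hsq : (iterPoly J' n ^ 2).coeff (k + 1) ≤ k * (J' * n) ^ (k - 1) := by
        rw [sq, Polynomial.coeff_mul, Finset.Nat.sum_antidiagonal_eq_sum_range_succ_mk]
        rw [Finset.sum_range_succ, Finset.sum_range_succ']
        simp only [Nat.sub_self, hc0, mul_zero, zero_mul, add_zero]
        calc (∑ i ∈ Finset.range k,
              (iterPoly J' n).coeff (i + 1) * (iterPoly J' n).coeff (k + 1 - (i + 1)))
            ≤ ∑ i ∈ Finset.range k, (J' * n) ^ (k - 1) := by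
              refine Finset.sum_le_sum fun i hi => ?_
              rw [Finset.mem_range] at hi
              have h1 : k + 1 - (i + 1) = (k - 1 - i) + 1 := by omega
              have h2 : i + (k - 1 - i) = k - 1 := by omega
              calc (iterPoly J' n).coeff (i + 1) * (iterPoly J' n).coeff (k + 1 - (i + 1))
                  ≤ (J' * n) ^ i * (J' * n) ^ (k - 1 - i) := by
                    refine mul_le_mul (ih i) ?_ (hcn _) (by positivity)
                    rw [h1]; exact ih _
                _ = (J' * n) ^ (k - 1) := by rw [← pow_add, h2]
          _ = k * (J' * n) ^ (k - 1) := by rw [Finset.sum_const, Finset.card_range]; ring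
      have key : (iterPoly J' (n+1)).coeff (k + 1) ≤
          (J' * n) ^ k + J' * (k * (J' * n) ^ (k - 1)) := by
        simp only [iterPoly, Polynomial.coeff_add, Polynomial.coeff_C_mul]
        exact add_le_add (ih k) (by nlinarith [hsq])
      refine le_trans key ?_
      rcases k with _ | m
      · simp
      · -- k = m+1 : reduce to nat binomial inequality
        have hnat := nat_binom_ineq n m
        have hcast : (n:ℝ) ^ (m+1) + (m+1) * (n:ℝ) ^ m ≤ ((n:ℝ)+1) ^ (m+1) := by
          exact_mod_cast hnat
        have hsimp : (m + 1 : ℕ) - 1 = m := by omega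
        rw [hsimp]
        have hJp : (0:ℝ) < J' ^ (m+1) := by positivity
        push_cast
        calc (J' * n) ^ (m+1) + J' * (((m:ℝ)+1) * (J' * n) ^ m)
            = J' ^ (m+1) * ((n:ℝ) ^ (m+1) + ((m:ℝ)+1) * (n:ℝ) ^ m) := by
              ring
          _ ≤ J' ^ (m+1) * ((n:ℝ)+1) ^ (m+1) := by nlinarith
          _ = (J' * ((n:ℝ)+1)) ^ (m+1) := (mul_pow _ _ _).symm

/-- Lemma `lem:iteration`: for `φ(x) = x + J'x²` with `J' > 0`, the `n`-th iterate
satisfies `φⁿ(x) ≤ x (1 + (J'nx) + ⋯ + (J'nx)^{2ⁿ−1})`, which equals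
`x ((J'nx)^{2ⁿ} − 1)/((J'nx) − 1)` when `J'nx ≠ 1`. -/
theorem stmt_1 (J' : ℝ) (hJ' : 0 < J') (n : ℕ) (x : ℝ) (hx : 0 ≤ x)
    (h : J' * (n : ℝ) * x ≠ 1) :
    (fun y : ℝ => y + J' * y ^ 2)^[n] x ≤
      x * ∑ k ∈ Finset.range (2 ^ n), (J' * (n : ℝ) * x) ^ k ∧
    x * ∑ k ∈ Finset.range (2 ^ n), (J' * (n : ℝ) * x) ^ k =
      x * (((J' * (n : ℝ) * x) ^ (2 ^ n) - 1) / ((J' * (n : ℝ) * x) - 1)) := by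
  constructor
  · rw [iterPoly_eval]
    rw [Polynomial.eval_eq_sum_range' (Nat.lt_succ_of_le (iterPoly_natDegree J' n))]
    rw [Finset.sum_range_succ']
    rw [iterPoly_coeff_zero]
    simp only [zero_mul, add_zero]
    calc (∑ i ∈ Finset.range (2 ^ n), (iterPoly J' n).coeff (i + 1) * x ^ (i + 1))
        ≤ ∑ i ∈ Finset.range (2 ^ n), (J' * n) ^ i * x ^ (i + 1) := by
          refine Finset.sum_le_sum fun i _ => ?_
          exact mul_le_mul_of_nonneg_right (iterPoly_coeff_le J' hJ' n i) (by positivity)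
      _ = x * ∑ k ∈ Finset.range (2 ^ n), (J' * (n : ℝ) * x) ^ k := by
          rw [Finset.mul_sum]
          refine Finset.sum_congr rfl fun i _ => ?_
          rw [mul_pow, mul_pow]
          ring
  · rw [geom_sum_eq h]
end

section
/- Let φ(x) = x + J'x² with J' > 0, and write its n-th iterate as the polynomial φⁿ(x) = Σ_{k=1}^{2ⁿ} a_k^{(n)} x^k. Then for all n ≥ 1 and all k with 1 ≤ k ≤ 2ⁿ, the coefficient a_k^{(n)} satisfies a_k^{(n)} ≤ (J' n)^{k−1}. -/
open Polynomial

lemma nat_binom (n m : ℕ) : n ^ (m + 1) + (m + 1) * n ^ m ≤ (n + 1) ^ (m + 1) := by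
  induction m with
  | zero => simpa using by omega
  | succ m ih =>
    have h3 : (n + 1) * (n ^ (m + 1) + (m + 1) * n ^ m)
        = n ^ (m + 2) + (m + 2) * n ^ (m + 1) + (m + 1) * n ^ m := by ring
    calc n ^ (m + 2) + (m + 2) * n ^ (m + 1)
        ≤ (n + 1) * (n ^ (m + 1) + (m + 1) * n ^ m) := by rw [h3]; exact Nat.le_add_right _ _
      _ ≤ (n + 1) * (n + 1) ^ (m + 1) := Nat.mul_le_mul_left _ ih
      _ = (n + 1) ^ (m + 2) := by ring

noncomputable def Fit (J' : ℝ) (n : ℕ) : Polynomial ℝ :=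
  (fun p : Polynomial ℝ => p.comp (X + C J' * X ^ 2))^[n] X

lemma Fit_succ' (J' : ℝ) (n : ℕ) :
    Fit J' (n + 1) = (Fit J' n).comp (X + C J' * X ^ 2) := by
  simp only [Fit, Function.iterate_succ_apply']

lemma iter_comp (J' : ℝ) (n : ℕ) (p : Polynomial ℝ) :
    (fun p : Polynomial ℝ => p.comp (X + C J' * X ^ 2))^[n] p = p.comp (Fit J' n) := by
  induction n generalizing p with
  | zero => simp [Fit]
  | succ n ih =>
    simp only [Function.iterate_succ_apply']
    rw [ih, Polynomial.comp_assoc, ← Fit_succ']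

lemma Fit_succ (J' : ℝ) (n : ℕ) :
    Fit J' (n + 1) = Fit J' n + C J' * (Fit J' n) ^ 2 := by
  have h : Fit J' (n + 1) = (X + C J' * X ^ 2).comp (Fit J' n) := by
    show (fun p : Polynomial ℝ => p.comp (X + C J' * X ^ 2))^[n + 1] X = _
    rw [Function.iterate_succ_apply]
    simp only [X_comp]
    rw [iter_comp]
  rw [h]
  simp [add_comp, mul_comp, pow_comp]

lemma Fit_coeff_zero (J' : ℝ) (n : ℕ) : (Fit J' n).coeff 0 = 0 := by
  induction n with
  | zero => simp [Fit]
  | succ n ih =>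
    rw [Fit_succ, coeff_add, coeff_C_mul, sq, mul_coeff_zero, ih]
    ring

lemma Fit_coeff_nonneg (J' : ℝ) (hJ' : 0 ≤ J') (n : ℕ) (k : ℕ) :
    0 ≤ (Fit J' n).coeff k := by
  induction n generalizing k with
  | zero =>
    rw [Fit]
    simp only [Function.iterate_zero, id_eq, coeff_X]
    split <;> norm_num
  | succ n ih =>
    rw [Fit_succ, coeff_add, coeff_C_mul, sq, coeff_mul]
    have hs : 0 ≤ ∑ x ∈ Finset.HasAntidiagonal.antidiagonal k, (Fit J' n).coeff x.1 * (Fit J' n).coeff x.2 :=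
      Finset.sum_nonneg fun x _ => mul_nonneg (ih x.1) (ih x.2)
    have h0 := ih k
    positivity

lemma Fit_coeff_succ (J' : ℝ) (n : ℕ) (k : ℕ) :
    (Fit J' (n + 1)).coeff k = (Fit J' n).coeff k +
      J' * ∑ i ∈ Finset.range (k + 1), (Fit J' n).coeff i * (Fit J' n).coeff (k - i) := by
  rw [Fit_succ, coeff_add, coeff_C_mul, sq, coeff_mul,
    Finset.Nat.sum_antidiagonal_eq_sum_range_succ_mk]

lemma key (J' : ℝ) (hJ' : 0 < J') (n : ℕ) (hn : 1 ≤ n) :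
    ∀ k : ℕ, 1 ≤ k → (Fit J' n).coeff k ≤ (J' * (n : ℝ)) ^ (k - 1) := by
  induction n, hn using Nat.le_induction with
  | base =>
    intro k hk
    have h1 : Fit J' 1 = X + C J' * X ^ 2 := by
      show (fun p : Polynomial ℝ => p.comp (X + C J' * X ^ 2))^[1] X = _
      simp
    match k with
    | 1 => simp [h1, coeff_one, coeff_X, coeff_X_pow]
    | 2 => simp [h1, coeff_X, coeff_X_pow]
    | (m + 3) =>
      rw [h1]
      have h0 : ((X : Polynomial ℝ) + C J' * X ^ 2).coeff (m + 3) = 0 := by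
        simp [coeff_X, coeff_X_pow]
      rw [h0]
      positivity
  | succ n hn ih =>
    intro k hk
    rw [Fit_coeff_succ]
    match k with
    | 1 =>
      have hz : ∑ i ∈ Finset.range 2, (Fit J' n).coeff i * (Fit J' n).coeff (1 - i) = 0 := by
        simp [Finset.sum_range_succ, Fit_coeff_zero]
      rw [hz]
      simpa using ih 1 le_rfl
    | (m + 2) =>
      have hsum : ∑ i ∈ Finset.range (m + 3), (Fit J' n).coeff i * (Fit J' n).coeff (m + 2 - i)
          = ∑ i ∈ Finset.range (m + 1),
              (Fit J' n).coeff (i + 1) * (Fit J' n).coeff (m + 1 - i) := by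
        rw [Finset.sum_range_succ, Finset.sum_range_succ']
        simp only [Fit_coeff_zero, Nat.sub_self, zero_mul, mul_zero, add_zero]
        refine Finset.sum_congr rfl fun i hi => ?_
        have he : m + 2 - (i + 1) = m + 1 - i := by omega
        rw [he]
      have hterms : ∀ i ∈ Finset.range (m + 1),
          (Fit J' n).coeff (i + 1) * (Fit J' n).coeff (m + 1 - i) ≤ (J' * (n : ℝ)) ^ m := by
        intro i hi
        rw [Finset.mem_range] at hi
        have h1 : (Fit J' n).coeff (i + 1) ≤ (J' * (n : ℝ)) ^ i := by
          simpa using ih (i + 1) (by omega)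
        have h2 : (Fit J' n).coeff (m + 1 - i) ≤ (J' * (n : ℝ)) ^ (m - i) := by
          have h := ih (m + 1 - i) (by omega)
          have he : m + 1 - i - 1 = m - i := by omega
          rwa [he] at h
        calc (Fit J' n).coeff (i + 1) * (Fit J' n).coeff (m + 1 - i)
            ≤ (J' * (n : ℝ)) ^ i * (J' * (n : ℝ)) ^ (m - i) :=
              mul_le_mul h1 h2 (Fit_coeff_nonneg J' hJ'.le n _) (by positivity)
          _ = (J' * (n : ℝ)) ^ m := by
              rw [← pow_add]
              congr 1
              omega
      have hbound : ∑ i ∈ Finset.range (m + 1),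
          (Fit J' n).coeff (i + 1) * (Fit J' n).coeff (m + 1 - i)
            ≤ ((m : ℝ) + 1) * (J' * (n : ℝ)) ^ m := by
        have h := Finset.sum_le_card_nsmul (Finset.range (m + 1)) _ ((J' * (n : ℝ)) ^ m) hterms
        rw [Finset.card_range, nsmul_eq_mul] at h
        push_cast at h
        convert h using 2
      have hIH : (Fit J' n).coeff (m + 2) ≤ (J' * (n : ℝ)) ^ (m + 1) := by
        simpa using ih (m + 2) (by omega)
      have hb : (n : ℝ) ^ (m + 1) + ((m : ℝ) + 1) * (n : ℝ) ^ m ≤ ((n : ℝ) + 1) ^ (m + 1) := by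
        exact_mod_cast nat_binom n m
      have hfin : (J' * (n : ℝ)) ^ (m + 1) + J' * (((m : ℝ) + 1) * (J' * (n : ℝ)) ^ m)
          ≤ (J' * ((n : ℝ) + 1)) ^ (m + 1) := by
        calc (J' * (n : ℝ)) ^ (m + 1) + J' * (((m : ℝ) + 1) * (J' * (n : ℝ)) ^ m)
            = J' ^ (m + 1) * ((n : ℝ) ^ (m + 1) + ((m : ℝ) + 1) * (n : ℝ) ^ m) := by ring
          _ ≤ J' ^ (m + 1) * ((n : ℝ) + 1) ^ (m + 1) :=
              mul_le_mul_of_nonneg_left hb (by positivity)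
          _ = (J' * ((n : ℝ) + 1)) ^ (m + 1) := (mul_pow _ _ _).symm
      have hcast : ((n + 1 : ℕ) : ℝ) = (n : ℝ) + 1 := by push_cast; ring
      have hek : m + 2 - 1 = m + 1 := rfl
      rw [hcast, hek]
      calc (Fit J' n).coeff (m + 2)
            + J' * ∑ i ∈ Finset.range (m + 3), (Fit J' n).coeff i * (Fit J' n).coeff (m + 2 - i)
          ≤ (J' * (n : ℝ)) ^ (m + 1) + J' * (((m : ℝ) + 1) * (J' * (n : ℝ)) ^ m) := by
            refine add_le_add hIH (mul_le_mul_of_nonneg_left ?_ hJ'.le)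
            rw [hsum]
            exact hbound
        _ ≤ (J' * ((n : ℝ) + 1)) ^ (m + 1) := hfin

/-- Coefficient bound for iterates of `φ(x) = x + J'x²`: writing the `n`-th iterate as the
polynomial `Σ_{k=1}^{2ⁿ} a_k^{(n)} x^k`, one has `a_k^{(n)} ≤ (J'n)^{k−1}` for
`n ≥ 1` and `1 ≤ k ≤ 2ⁿ`. -/
theorem stmt_2 (J' : ℝ) (hJ' : 0 < J') (n : ℕ) (hn : 1 ≤ n) (k : ℕ)
    (hk1 : 1 ≤ k) (hk2 : k ≤ 2 ^ n) :
    ((fun p : Polynomial ℝ => p.comp (X + C J' * X ^ 2))^[n] X).coeff k ≤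
      (J' * (n : ℝ)) ^ (k - 1) := by
  exact key J' hJ' n hn k hk1
end

section
/- Let C: I ⇉ ℝ^d be a Lipschitz set-valued map taking η-prox-regular values, and let (t,q) with t in the interior of I and q ∈ C(t). Then the cone of admissible velocities 𝒞_{t,q} = liminf_{ε↓0} (C(t+ε) − q)/ε is a convex subset of ℝ^d. -/
open scoped RealInnerProductSpace
open Metric Set Filter Topology

noncomputable section

/-- The (set-valued) metric projection onto `Q`. -/
def projSet {E : Type*} [NormedAddCommGroup E] (Q : Set E) (x : E) : Set E :=
  {y ∈ Q | dist x y = Metric.infDist x Q}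

/-- The proximal normal cone `N(Q,x) = {v : ∃ s > 0, x ∈ P_Q(x + s v)}`. -/
def proxNormalCone {E : Type*} [NormedAddCommGroup E] [NormedSpace ℝ E]
    (Q : Set E) (x : E) : Set E :=
  {v | ∃ s : ℝ, 0 < s ∧ x ∈ projSet Q (x + s • v)}

/-- `Q` is `η`-prox-regular: for every `x ∈ Q` and `v ∈ N(Q,x) \ {0}`, the open ball
`B(x + η v/‖v‖, η)` does not meet `Q`. -/
def IsProxRegular {E : Type*} [NormedAddCommGroup E] [NormedSpace ℝ E]
    (η : ℝ) (Q : Set E) : Prop :=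
  ∀ x ∈ Q, ∀ v ∈ proxNormalCone Q x, v ≠ 0 →
    Metric.ball (x + (η / ‖v‖) • v) η ∩ Q = ∅

/-- hypomonotonicity of proximal normals -/
lemma prox_ineq {E : Type*} [NormedAddCommGroup E] [InnerProductSpace ℝ E]
    {η : ℝ} (hη : 0 < η) {Q : Set E} (hQ : IsProxRegular η Q)
    {p w : E} (hp : p ∈ Q) (hw : w ∈ Q) {v : E} (hv : v ∈ proxNormalCone Q p) :
    ⟪v, w - p⟫ ≤ ‖v‖ / (2 * η) * ‖w - p‖ ^ 2 := by
  rcases eq_or_ne v 0 with rfl | hv0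
  · simp [inner_zero_left]
  have hball := hQ p hp v hv hv0
  have hnot : w ∉ Metric.ball (p + (η / ‖v‖) • v) η := by
    intro hmem
    have : w ∈ Metric.ball (p + (η / ‖v‖) • v) η ∩ Q := ⟨hmem, hw⟩
    rw [hball] at this; exact this
  have hdist : η ≤ ‖w - (p + (η / ‖v‖) • v)‖ := by
    simpa [Metric.mem_ball, dist_eq_norm, not_lt] using hnot
  have hvn : (0:ℝ) < ‖v‖ := norm_pos_iff.2 hv0
  have hsq : η ^ 2 ≤ ‖(w - p) - (η / ‖v‖) • v‖ ^ 2 := by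
    have h1 : w - (p + (η / ‖v‖) • v) = (w - p) - (η / ‖v‖) • v := by abel
    rw [← h1]
    exact pow_le_pow_left₀ (le_of_lt hη) hdist 2
  have hexp : ‖(w - p) - (η / ‖v‖) • v‖ ^ 2
      = ‖w - p‖ ^ 2 - 2 * (η / ‖v‖) * ⟪v, w - p⟫ + (η / ‖v‖) ^ 2 * ‖v‖ ^ 2 := by
    rw [norm_sub_sq_real, norm_smul, real_inner_smul_right]
    rw [real_inner_comm]
    simp [abs_of_pos (div_pos hη hvn), abs_of_pos hη, mul_pow]
    ring
  have hvv : (η / ‖v‖) ^ 2 * ‖v‖ ^ 2 = η ^ 2 := by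
    field_simp
  rw [hexp, hvv] at hsq
  have h2 : 2 * (η / ‖v‖) * ⟪v, w - p⟫ ≤ ‖w - p‖ ^ 2 := by linarith
  have h3 : ⟪v, w - p⟫ * (2 * η) ≤ ‖w - p‖ ^ 2 * ‖v‖ := by
    have := mul_le_mul_of_nonneg_right h2 (le_of_lt hvn)
    calc ⟪v, w - p⟫ * (2 * η) = 2 * (η / ‖v‖) * ⟪v, w - p⟫ * ‖v‖ := by
          field_simp
      _ ≤ ‖w - p‖ ^ 2 * ‖v‖ := this
  have hre : ‖v‖ / (2 * η) * ‖w - p‖ ^ 2 = ‖w - p‖ ^ 2 * ‖v‖ / (2 * η) := by ring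
  rw [hre, le_div_iff₀ (by positivity)]
  linarith [h3]

lemma prox_comb {E : Type*} [NormedAddCommGroup E] [InnerProductSpace ℝ E] [ProperSpace E]
    {η : ℝ} (hη : 0 < η) {Q : Set E} (hne : Q.Nonempty) (hcl : IsClosed Q)
    (hQ : IsProxRegular η Q) {x y : E} (hx : x ∈ Q) (hy : y ∈ Q)
    {a b : ℝ} (ha : 0 ≤ a) (hb : 0 ≤ b) (hab : a + b = 1) :
    ∃ p ∈ Q, dist (a • x + b • y) p ≤ 2 / η * ‖x - y‖ ^ 2 := by
  set z := a • x + b • y with hz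
  clear_value z
  obtain ⟨p, hpQ, hpd⟩ := hcl.exists_infDist_eq_dist hne z
  refine ⟨p, hpQ, ?_⟩
  rcases eq_or_ne z p with h | hzp
  · rw [h]; simp; positivity
  set v := z - p with hv
  clear_value v
  have hvmem : v ∈ proxNormalCone Q p := by
    refine ⟨1, one_pos, hpQ, ?_⟩
    simp only [one_smul, hv]
    rw [show p + (z - p) = z by abel]
    exact hpd.symm
  have h1 := prox_ineq hη hQ hpQ hx hvmem
  have h2 := prox_ineq hη hQ hpQ hy hvmem
  have hvpos : (0:ℝ) < ‖v‖ := by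
    rw [hv]; exact norm_pos_iff.2 (sub_ne_zero.2 hzp)
  have hcomb : v = a • (x - p) + b • (y - p) := by
    have h : a • (x - p) + b • (y - p) = a • x + b • y - (a + b) • p := by
      rw [smul_sub, smul_sub, add_smul]; abel
    rw [hv, hz, h, hab, one_smul]
  have hinner : ‖v‖ ^ 2 = a * ⟪v, x - p⟫ + b * ⟪v, y - p⟫ := by
    rw [← real_inner_self_eq_norm_sq]
    conv_lhs => rw [hcomb]
    rw [inner_add_right, real_inner_smul_right, real_inner_smul_right, ← hcomb]
  -- distance bounds
  have hzx : ‖z - x‖ = b * ‖x - y‖ := by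
    have : z - x = b • (y - x) := by
      have h : b • (y - x) = a • x + b • y - (a + b) • x := by
        rw [smul_sub, add_smul]; abel
      rw [hz, h, hab, one_smul]
    rw [this, norm_smul, Real.norm_eq_abs, abs_of_nonneg hb, norm_sub_rev]
  have hzy : ‖z - y‖ = a * ‖x - y‖ := by
    have : z - y = a • (x - y) := by
      have h : a • (x - y) = a • x + b • y - (a + b) • y := by
        rw [smul_sub, add_smul]; abel
      rw [hz, h, hab, one_smul]
    rw [this, norm_smul, Real.norm_eq_abs, abs_of_nonneg ha]
  have hxy0 : (0:ℝ) ≤ ‖x - y‖ := norm_nonneg _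
  have ha1 : a ≤ 1 := by linarith
  have hb1 : b ≤ 1 := by linarith
  have hdistzp : ‖z - p‖ ≤ ‖x - y‖ := by
    have : dist z p ≤ dist z x := by
      rw [← hpd]; exact Metric.infDist_le_dist_of_mem hx
    rw [dist_eq_norm, dist_eq_norm] at this
    calc ‖z - p‖ ≤ ‖z - x‖ := this
      _ = b * ‖x - y‖ := hzx
      _ ≤ 1 * ‖x - y‖ := by nlinarith
      _ = ‖x - y‖ := one_mul _
  have hxp : ‖x - p‖ ≤ 2 * ‖x - y‖ := by
    calc ‖x - p‖ = ‖(x - z) + (z - p)‖ := by rw [show (x - z) + (z - p) = x - p by abel]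
      _ ≤ ‖x - z‖ + ‖z - p‖ := norm_add_le _ _
      _ = ‖z - x‖ + ‖z - p‖ := by rw [norm_sub_rev]
      _ ≤ ‖x - y‖ + ‖x - y‖ := by rw [hzx]; nlinarith
      _ = 2 * ‖x - y‖ := by ring
  have hyp : ‖y - p‖ ≤ 2 * ‖x - y‖ := by
    calc ‖y - p‖ = ‖(y - z) + (z - p)‖ := by rw [show (y - z) + (z - p) = y - p by abel]
      _ ≤ ‖y - z‖ + ‖z - p‖ := norm_add_le _ _
      _ = ‖z - y‖ + ‖z - p‖ := by rw [norm_sub_rev]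
      _ ≤ ‖x - y‖ + ‖x - y‖ := by rw [hzy]; nlinarith
      _ = 2 * ‖x - y‖ := by ring
  have hkey : ‖v‖ ^ 2 ≤ ‖v‖ / (2 * η) * (a * ‖x - p‖ ^ 2 + b * ‖y - p‖ ^ 2) := by
    rw [hinner]
    have e1 := mul_le_mul_of_nonneg_left h1 ha
    have e2 := mul_le_mul_of_nonneg_left h2 hb
    have hre : a * (‖v‖ / (2 * η) * ‖x - p‖ ^ 2) + b * (‖v‖ / (2 * η) * ‖y - p‖ ^ 2)
        = ‖v‖ / (2 * η) * (a * ‖x - p‖ ^ 2 + b * ‖y - p‖ ^ 2) := by ring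
    linarith
  have hbound : a * ‖x - p‖ ^ 2 + b * ‖y - p‖ ^ 2 ≤ 4 * ‖x - y‖ ^ 2 := by
    have hx2 : ‖x - p‖ ^ 2 ≤ (2 * ‖x - y‖) ^ 2 := by
      exact pow_le_pow_left₀ (norm_nonneg _) hxp 2
    have hy2 : ‖y - p‖ ^ 2 ≤ (2 * ‖x - y‖) ^ 2 := by
      exact pow_le_pow_left₀ (norm_nonneg _) hyp 2
    have e1 := mul_le_mul_of_nonneg_left hx2 ha
    have e2 := mul_le_mul_of_nonneg_left hy2 hb
    have hre : a * (2 * ‖x - y‖) ^ 2 + b * (2 * ‖x - y‖) ^ 2 = (a + b) * (4 * ‖x - y‖ ^ 2) := by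
      ring
    rw [hab, one_mul] at hre
    linarith
  have : ‖v‖ ≤ 2 / η * ‖x - y‖ ^ 2 := by
    have h4 : ‖v‖ ^ 2 ≤ ‖v‖ / (2 * η) * (4 * ‖x - y‖ ^ 2) := by
      calc ‖v‖ ^ 2 ≤ ‖v‖ / (2 * η) * (a * ‖x - p‖ ^ 2 + b * ‖y - p‖ ^ 2) := hkey
        _ ≤ ‖v‖ / (2 * η) * (4 * ‖x - y‖ ^ 2) :=
          mul_le_mul_of_nonneg_left hbound (by positivity)
    have h5 : ‖v‖ * ‖v‖ ≤ ‖v‖ * (2 / η * ‖x - y‖ ^ 2) := by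
      rw [← sq]
      calc ‖v‖ ^ 2 ≤ ‖v‖ / (2 * η) * (4 * ‖x - y‖ ^ 2) := h4
        _ = ‖v‖ * (2 / η * ‖x - y‖ ^ 2) := by field_simp; ring
    exact le_of_mul_le_mul_left h5 hvpos
  rw [dist_eq_norm, ← hv]
  exact this

/-- The cone of admissible velocities `𝒞_{t,q} = liminf_{ε↓0} (C(t+ε) − q)/ε`. -/
def velCone {d : ℕ} (C : ℝ → Set (EuclideanSpace ℝ (Fin d))) (t : ℝ)
    (q : EuclideanSpace ℝ (Fin d)) : Set (EuclideanSpace ℝ (Fin d)) :=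
  {v | ∃ f : ℝ → EuclideanSpace ℝ (Fin d),
      Tendsto f (𝓝[>] (0 : ℝ)) (𝓝 v) ∧
      ∀ᶠ ε in 𝓝[>] (0 : ℝ), q + ε • f ε ∈ C (t + ε)}

/-- Proposition `prop:coneconvex`: for a Lipschitz set-valued map with nonempty closed
`η`-prox-regular values, the cone of admissible velocities `𝒞_{t,q}` is convex. -/
theorem stmt_6 {d : ℕ} (C : ℝ → Set (EuclideanSpace ℝ (Fin d))) (I : Set ℝ)
    (c₀ η : ℝ) (hc₀ : 0 < c₀) (hη : 0 < η)
    (hLip : ∀ t ∈ I, ∀ s ∈ I, Metric.hausdorffDist (C t) (C s) ≤ c₀ * |t - s|)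
    (hval : ∀ t ∈ I, (C t).Nonempty ∧ IsClosed (C t) ∧ IsProxRegular η (C t))
    (t : ℝ) (ht : t ∈ interior I) (q : EuclideanSpace ℝ (Fin d)) (hq : q ∈ C t) :
    Convex ℝ (velCone C t q) := by
  classical
  intro u hu v hv a b ha hb hab
  obtain ⟨f, hf, hfC⟩ := hu
  obtain ⟨g, hg, hgC⟩ := hv
  have hI : ∀ᶠ ε in 𝓝[>] (0:ℝ), t + ε ∈ I := by
    have hcont : Tendsto (fun ε : ℝ => t + ε) (𝓝 0) (𝓝 t) := by
      simpa using (continuous_add_left t).tendsto (0:ℝ)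
    have hev : ∀ᶠ ε in 𝓝 (0:ℝ), t + ε ∈ interior I :=
      hcont.eventually_mem (isOpen_interior.mem_nhds ht)
    exact ((hev.mono fun ε h => interior_subset h).filter_mono nhdsWithin_le_nhds)
  set m : ℝ → EuclideanSpace ℝ (Fin d) := fun ε => a • f ε + b • g ε with hm
  have hex : ∀ᶠ ε in 𝓝[>] (0:ℝ), ∃ p, p ∈ C (t+ε) ∧
      dist (q + ε • m ε) p ≤ 2/η * (ε * ‖f ε - g ε‖)^2 := by
    filter_upwards [hfC, hgC, hI, self_mem_nhdsWithin] with ε h1 h2 h3 h4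
    have hεpos : (0:ℝ) < ε := h4
    obtain ⟨hne, hcl, hpr⟩ := hval _ h3
    obtain ⟨p, hpQ, hpd⟩ := prox_comb hη hne hcl hpr h1 h2 ha hb hab
    refine ⟨p, hpQ, ?_⟩
    have e1 : a • (q + ε • f ε) + b • (q + ε • g ε) = (a+b) • q + ε • m ε := by
      rw [hm, smul_add, smul_add, add_smul, smul_smul, smul_smul, mul_comm a ε, mul_comm b ε,
        ← smul_smul, ← smul_smul, smul_add]
      abel
    rw [hab, one_smul] at e1
    have e2 : ‖(q + ε • f ε) - (q + ε • g ε)‖ = ε * ‖f ε - g ε‖ := by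
      have e3 : (q + ε • f ε) - (q + ε • g ε) = ε • (f ε - g ε) := by
        rw [smul_sub]; abel
      rw [e3, norm_smul, Real.norm_eq_abs, abs_of_pos hεpos]
    rw [e1, e2] at hpd
    exact hpd
  set h : ℝ → EuclideanSpace ℝ (Fin d) := fun ε =>
    if hc : ∃ p, p ∈ C (t+ε) ∧ dist (q + ε • m ε) p ≤ 2/η * (ε * ‖f ε - g ε‖)^2
    then ε⁻¹ • (hc.choose - q) else m ε with hhdef
  have hmem : ∀ᶠ ε in 𝓝[>] (0:ℝ), q + ε • h ε ∈ C (t + ε) := by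
    filter_upwards [hex, self_mem_nhdsWithin] with ε hc hε
    have hεpos : (0:ℝ) < ε := hε
    have : h ε = ε⁻¹ • (hc.choose - q) := by rw [hhdef]; exact dif_pos hc
    rw [this, smul_smul, mul_inv_cancel₀ (ne_of_gt hεpos), one_smul,
      show q + (hc.choose - q) = hc.choose by abel]
    exact hc.choose_spec.1
  have hbound : ∀ᶠ ε in 𝓝[>] (0:ℝ), ‖h ε - m ε‖ ≤ 2/η * ε * ‖f ε - g ε‖^2 := by
    filter_upwards [hex, self_mem_nhdsWithin] with ε hc hε
    have hεpos : (0:ℝ) < ε := hε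
    have hh : h ε = ε⁻¹ • (hc.choose - q) := by rw [hhdef]; exact dif_pos hc
    have e : ε⁻¹ • (hc.choose - q) - m ε = ε⁻¹ • (hc.choose - (q + ε • m ε)) := by
      have e0 : ε⁻¹ • (ε • m ε) = m ε := by
        rw [smul_smul, inv_mul_cancel₀ (ne_of_gt hεpos), one_smul]
      rw [show hc.choose - (q + ε • m ε) = (hc.choose - q) - ε • m ε by abel]
      conv_rhs => rw [smul_sub, e0]
    rw [hh, e, norm_smul, Real.norm_eq_abs, abs_of_pos (inv_pos.2 hεpos)]
    have hd := hc.choose_spec.2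
    rw [dist_comm, dist_eq_norm] at hd
    calc ε⁻¹ * ‖hc.choose - (q + ε • m ε)‖ ≤ ε⁻¹ * (2/η * (ε * ‖f ε - g ε‖)^2) :=
          mul_le_mul_of_nonneg_left hd (by positivity)
      _ = 2/η * ε * ‖f ε - g ε‖^2 := by field_simp
  have hB : Tendsto (fun ε => 2/η * ε * ‖f ε - g ε‖^2) (𝓝[>] (0:ℝ)) (𝓝 0) := by
    have h1 : Tendsto (fun ε : ℝ => ε) (𝓝[>] (0:ℝ)) (𝓝 0) :=
      tendsto_id.mono_left nhdsWithin_le_nhds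
    have h2 : Tendsto (fun ε => ‖f ε - g ε‖^2) (𝓝[>] (0:ℝ)) (𝓝 (‖u - v‖^2)) :=
      ((hf.sub hg).norm).pow 2
    have h3 := ((tendsto_const_nhds (x := 2/η) (f := 𝓝[>] (0:ℝ))).mul h1).mul h2
    simpa using h3
  have hmT : Tendsto m (𝓝[>] (0:ℝ)) (𝓝 (a • u + b • v)) :=
    (hf.const_smul a).add (hg.const_smul b)
  have hdiff : Tendsto (fun ε => h ε - m ε) (𝓝[>] (0:ℝ)) (𝓝 0) :=
    squeeze_zero_norm' hbound hB
  have hhT : Tendsto h (𝓝[>] (0:ℝ)) (𝓝 (a • u + b • v)) := by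
    have := hdiff.add hmT
    simpa using this
  exact ⟨h, hhT, hmem⟩
end
end

section
/- Let Q be a uniformly prox-regular closed subset of ℝ^d. Then for every x ∈ Q, the proximal normal cone and the tangent cone are mutually polar: T_Q(x) = N(Q,x)° = {u ∈ ℝ^d : ⟨u,v⟩ ≤ 0 for all v ∈ N(Q,x)}. In particular, T_Q(x) is a closed convex cone. -/
open scoped RealInnerProductSpace
open Metric Set Filter Topology

noncomputable section

/-- The (Bouligand) tangent cone `T_Q(x) = limsup_{ε↓0} (Q−x)/ε`. -/
def tangentConeP {E : Type*} [NormedAddCommGroup E] [NormedSpace ℝ E]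
    (Q : Set E) (x : E) : Set E :=
  {v | ∃ (vk : ℕ → E) (εk : ℕ → ℝ), (∀ k, 0 < εk k) ∧
      Tendsto εk atTop (𝓝 0) ∧ Tendsto vk atTop (𝓝 v) ∧
      ∀ k, x + εk k • vk k ∈ Q}

lemma aux_sq {E : Type*} [NormedAddCommGroup E] [InnerProductSpace ℝ E]
    {η : ℝ} (hη : 0 < η) {a w : E} (hw : ‖w‖ = 1) (h : η ≤ ‖a - η • w‖) :
    ⟪a, w⟫ * (2 * η) ≤ ‖a‖ ^ 2 := by
  have h2 : η ^ 2 ≤ ‖a - η • w‖ ^ 2 := by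
    have := pow_le_pow_left₀ hη.le h 2
    simpa using this
  have hexp : ‖a - η • w‖ ^ 2 = ‖a‖ ^ 2 - 2 * (η * ⟪a, w⟫) + η ^ 2 := by
    rw [norm_sub_sq_real, real_inner_smul_right, norm_smul]
    simp [hw, abs_of_pos hη]
  nlinarith [h2, hexp]

/-- Lemma `lem:cone`: for a uniformly prox-regular set `Q` and `x ∈ Q`, the tangent cone
is the polar of the proximal normal cone: `T_Q(x) = N(Q,x)° = {u : ⟨u,v⟩ ≤ 0 ∀ v ∈ N(Q,x)}`;
in particular it is closed and convex. -/
theorem stmt_7 {d : ℕ} (Q : Set (EuclideanSpace ℝ (Fin d))) (hQc : IsClosed Q)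
    (hQ : ∃ η : ℝ, 0 < η ∧ IsProxRegular η Q)
    (x : EuclideanSpace ℝ (Fin d)) (hx : x ∈ Q) :
    tangentConeP Q x = {u | ∀ v ∈ proxNormalCone Q x, ⟪u, v⟫ ≤ 0} ∧
    IsClosed (tangentConeP Q x) ∧ Convex ℝ (tangentConeP Q x) := by
  obtain ⟨η, hη, hpr⟩ := hQ
  have h2η : (0:ℝ) < 2 * η := by linarith
  have key : tangentConeP Q x = {u | ∀ v ∈ proxNormalCone Q x, ⟪u, v⟫ ≤ 0} := by
    apply Subset.antisymm
    · rintro u ⟨vk, εk, hεpos, hε0, hvk, hmem⟩ v hv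
      rcases eq_or_ne v 0 with rfl | hv0
      · simp
      have hvpos : (0:ℝ) < ‖v‖ := norm_pos_iff.2 hv0
      have hball := hpr x hx v hv hv0
      set w : EuclideanSpace ℝ (Fin d) := ‖v‖⁻¹ • v with hwdef
      have hw : ‖w‖ = 1 := by
        rw [hwdef, norm_smul, Real.norm_eq_abs, abs_of_pos (inv_pos.2 hvpos)]
        field_simp
      have hcw : x + (η / ‖v‖) • v = x + η • w := by
        rw [hwdef, div_eq_mul_inv, mul_smul]
      have ha : ∀ k, ⟪vk k, w⟫ ≤ εk k * ‖vk k‖ ^ 2 / (2 * η) := by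
        intro k
        have hz : x + εk k • vk k ∈ Q := hmem k
        have hnb : x + εk k • vk k ∉ ball (x + η • w) η := by
          intro hb
          rw [hcw] at hball
          exact (eq_empty_iff_forall_notMem.1 hball _) ⟨hb, hz⟩
        have hdist : η ≤ ‖(εk k • vk k) - η • w‖ := by
          have h1 : η ≤ dist (x + εk k • vk k) (x + η • w) :=
            le_of_not_gt fun h => hnb (mem_ball.2 h)
          rwa [dist_eq_norm, add_sub_add_left_eq_sub] at h1
        have h2 := aux_sq hη hw hdist
        have e1 : ⟪εk k • vk k, w⟫ = εk k * ⟪vk k, w⟫ := real_inner_smul_left _ _ _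
        have e2 : ‖εk k • vk k‖ ^ 2 = εk k * (εk k * ‖vk k‖ ^ 2) := by
          rw [norm_smul, Real.norm_eq_abs, abs_of_pos (hεpos k)]; ring
        rw [e1, e2] at h2
        rw [le_div_iff₀ h2η]
        have h3 : εk k * (⟪vk k, w⟫ * (2 * η)) ≤ εk k * (εk k * ‖vk k‖ ^ 2) := by
          nlinarith [h2]
        exact le_of_mul_le_mul_left h3 (hεpos k)
      have hlim1 : Tendsto (fun k => ⟪vk k, w⟫) atTop (𝓝 (⟪u, w⟫ : ℝ)) :=
        hvk.inner tendsto_const_nhds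
      have hlim2 : Tendsto (fun k => εk k * ‖vk k‖ ^ 2 / (2 * η)) atTop (𝓝 0) := by
        have h1 : Tendsto (fun k => ‖vk k‖ ^ 2) atTop (𝓝 (‖u‖ ^ 2)) := (hvk.norm).pow 2
        have := (hε0.mul h1).div_const (2 * η)
        simpa using this
      have huw : ⟪u, w⟫ ≤ 0 := le_of_tendsto_of_tendsto' hlim1 hlim2 ha
      have hev : ⟪u, v⟫ = ‖v‖ * ⟪u, w⟫ := by
        rw [hwdef, real_inner_smul_right]
        field_simp
      rw [hev]
      exact mul_nonpos_iff.2 (Or.inl ⟨hvpos.le, huw⟩)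
    · intro u hu
      set ε : ℕ → ℝ := fun n => ((n : ℝ) + 1)⁻¹ with hεdef
      have hεpos : ∀ n, (0:ℝ) < ε n := fun n => by positivity
      have hεlim : Tendsto ε atTop (𝓝 0) := by
        simpa [hεdef, one_div] using (tendsto_one_div_add_atTop_nhds_zero_nat :
          Tendsto (fun n : ℕ => 1 / ((n : ℝ) + 1)) atTop (𝓝 0))
      set z : ℕ → EuclideanSpace ℝ (Fin d) := fun n => x + ε n • u with hzdef
      have hQne : Q.Nonempty := ⟨x, hx⟩
      have hproj : ∀ n, ∃ y ∈ Q, infDist (z n) Q = dist (z n) y := fun n =>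
        hQc.exists_infDist_eq_dist hQne (z n)
      choose y hyQ hyd using hproj
      set r : ℕ → ℝ := fun n => infDist (z n) Q with hrdef
      have hrle : ∀ n, r n ≤ ε n * ‖u‖ := by
        intro n
        calc r n ≤ dist (z n) x := infDist_le_dist_of_mem hx
        _ = ‖ε n • u‖ := by rw [dist_eq_norm]; simp [hzdef]
        _ = ε n * ‖u‖ := by rw [norm_smul, Real.norm_eq_abs, abs_of_pos (hεpos n)]
      have hyx : ∀ n, ‖y n - x‖ ≤ 2 * (ε n * ‖u‖) := by
        intro n
        have h1 : dist (y n) x ≤ dist (y n) (z n) + dist (z n) x := dist_triangle _ _ _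
        have h2 : dist (y n) (z n) = r n := by rw [dist_comm, ← hyd n]
        have h3 : dist (z n) x = ε n * ‖u‖ := by
          rw [dist_eq_norm]
          simp only [hzdef, add_sub_cancel_left]
          rw [norm_smul, Real.norm_eq_abs, abs_of_pos (hεpos n)]
        rw [← dist_eq_norm]
        rw [h2, h3] at h1
        have := hrle n
        linarith
      -- the key limit : r n / ε n → 0
      have hkey : Tendsto (fun n => (ε n)⁻¹ * r n) atTop (𝓝 0) := by
        rw [tendsto_order]
        constructor
        · intro c hc
          filter_upwards with n
          have : (0:ℝ) ≤ (ε n)⁻¹ * r n :=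
            mul_nonneg (inv_pos.2 (hεpos n)).le infDist_nonneg
          linarith
        · intro c hc
          by_contra hevt
          rw [not_eventually] at hevt
          have hev' : ∃ᶠ n in atTop, c ≤ (ε n)⁻¹ * r n := hevt.mono fun n hn => not_lt.1 hn
          obtain ⟨φ, hφ, hφc⟩ := extraction_of_frequently_atTop hev'
          have hrpos : ∀ k, 0 < r (φ k) := by
            intro k
            rcases (infDist_nonneg : (0:ℝ) ≤ r (φ k)).lt_or_eq with h | h
            · exact h
            · exfalso
              have h0 : r (φ k) = 0 := h.symm
              have h1 := hφc k
              rw [h0, mul_zero] at h1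
              linarith
          set w : ℕ → EuclideanSpace ℝ (Fin d) :=
            fun k => (r (φ k))⁻¹ • (z (φ k) - y (φ k)) with hwdef
          have hzy : ∀ k, ‖z (φ k) - y (φ k)‖ = r (φ k) := by
            intro k
            rw [← dist_eq_norm, ← hyd (φ k)]
          have hwnorm : ∀ k, ‖w k‖ = 1 := by
            intro k
            rw [hwdef]
            simp only [norm_smul, Real.norm_eq_abs, abs_of_pos (inv_pos.2 (hrpos k)), hzy k]
            exact inv_mul_cancel₀ (hrpos k).ne'
          have hvN : ∀ k, (z (φ k) - y (φ k)) ∈ proxNormalCone Q (y (φ k)) := by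
            intro k
            refine ⟨1, one_pos, ?_⟩
            have he : y (φ k) + (1:ℝ) • (z (φ k) - y (φ k)) = z (φ k) := by
              rw [one_smul]; abel
            rw [he]
            exact ⟨hyQ (φ k), (hyd (φ k)).symm⟩
          have hball2 : ∀ k, ∀ q ∈ Q, η ≤ dist q (y (φ k) + η • w k) := by
            intro k q hq
            have hvne : z (φ k) - y (φ k) ≠ 0 := by
              intro h0
              have := hzy k
              rw [h0, norm_zero] at this
              exact (hrpos k).ne this
            have hb := hpr (y (φ k)) (hyQ (φ k)) _ (hvN k) hvne
            have hc2 : (η / ‖z (φ k) - y (φ k)‖) • (z (φ k) - y (φ k)) = η • w k := by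
              rw [hzy k, hwdef, div_eq_mul_inv, mul_smul]
            rw [hc2] at hb
            by_contra hlt
            exact (eq_empty_iff_forall_notMem.1 hb q) ⟨mem_ball.2 (not_le.1 hlt), hq⟩
          -- inequality chain : c ≤ ε (φ k) * K + ⟪u, w k⟫
          set K : ℝ := 2 * ‖u‖ ^ 2 / η with hKdef
          have hchain : ∀ k, c ≤ ε (φ k) * K + ⟪u, w k⟫ := by
            intro k
            have h1 : ⟪x - y (φ k), w k⟫ * (2 * η) ≤ ‖x - y (φ k)‖ ^ 2 := by
              apply aux_sq hη (hwnorm k)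
              have := hball2 k x hx
              rwa [dist_eq_norm, ← sub_sub] at this
            have h2 : ‖x - y (φ k)‖ ^ 2 ≤ (2 * (ε (φ k) * ‖u‖)) ^ 2 := by
              have := hyx (φ k)
              have hn : ‖x - y (φ k)‖ = ‖y (φ k) - x‖ := norm_sub_rev _ _
              rw [hn]
              exact pow_le_pow_left₀ (norm_nonneg _) this 2
            have hI1 : ⟪x - y (φ k), w k⟫ ≤ ε (φ k) ^ 2 * K := by
              rw [hKdef, ← mul_div_assoc, le_div_iff₀ hη]
              nlinarith [h1, h2]
            have h3 : r (φ k) = ⟪x - y (φ k), w k⟫ + ε (φ k) * ⟪u, w k⟫ := by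
              have hz1 : z (φ k) - y (φ k) = (x - y (φ k)) + ε (φ k) • u := by
                show x + ε (φ k) • u - y (φ k) = _; abel
              have hr1 : r (φ k) = ⟪z (φ k) - y (φ k), w k⟫ := by
                rw [hwdef, real_inner_smul_right, real_inner_self_eq_norm_sq, hzy k]
                rw [pow_two, ← mul_assoc, inv_mul_cancel₀ (hrpos k).ne', one_mul]
              rw [hr1, hz1, inner_add_left, real_inner_smul_left]
            have hce : ε (φ k) * c ≤ ε (φ k) * (ε (φ k) * K + ⟪u, w k⟫) := by
              have hεr : ε (φ k) * ((ε (φ k))⁻¹ * r (φ k)) = r (φ k) := by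
                rw [← mul_assoc, mul_inv_cancel₀ (hεpos (φ k)).ne', one_mul]
              have h4 := mul_le_mul_of_nonneg_left (hφc k) (hεpos (φ k)).le
              rw [hεr] at h4
              have h5 : r (φ k) ≤ ε (φ k) * (ε (φ k) * K + ⟪u, w k⟫) := by
                rw [h3]; nlinarith [hI1]
              linarith
            exact le_of_mul_le_mul_left hce (hεpos (φ k))
          -- compactness
          have hwmem : ∀ k, w k ∈ sphere (0 : EuclideanSpace ℝ (Fin d)) 1 := by
            intro k
            rw [mem_sphere_zero_iff_norm]
            exact hwnorm k
          obtain ⟨wbar, hwbar_mem, ψ, hψ, hwlim⟩ :=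
            (isCompact_sphere (0 : EuclideanSpace ℝ (Fin d)) 1).tendsto_subseq hwmem
          have hwbar_norm : ‖wbar‖ = 1 := mem_sphere_zero_iff_norm.1 hwbar_mem
          have hεφψ : Tendsto (fun j => ε (φ (ψ j))) atTop (𝓝 0) :=
            hεlim.comp ((hφ.comp hψ).tendsto_atTop)
          have hylim : Tendsto (fun j => y (φ (ψ j))) atTop (𝓝 x) := by
            rw [tendsto_iff_norm_sub_tendsto_zero]
            apply squeeze_zero (fun j => norm_nonneg _) (fun j => hyx (φ (ψ j)))
            have := (hεφψ.mul_const ‖u‖).const_mul (2:ℝ)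
            simpa using this
          -- wbar is a proximal normal at x
          have hwbarN : wbar ∈ proxNormalCone Q x := by
            refine ⟨η, hη, hx, ?_⟩
            have hd : dist (x + η • wbar) x = η := by
              rw [dist_eq_norm, add_sub_cancel_left, norm_smul, Real.norm_eq_abs,
                abs_of_pos hη, hwbar_norm, mul_one]
            have hge : ∀ q ∈ Q, η ≤ dist (x + η • wbar) q := by
              intro q hq
              have hlim : Tendsto (fun j => dist q (y (φ (ψ j)) + η • w (ψ j))) atTop
                  (𝓝 (dist q (x + η • wbar))) := by
                apply Tendsto.dist tendsto_const_nhds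
                exact hylim.add ((hwlim.const_smul η))
              have hle : η ≤ dist q (x + η • wbar) :=
                ge_of_tendsto' hlim (fun j => hball2 (ψ j) q hq)
              rwa [dist_comm]
            have hinf : infDist (x + η • wbar) Q = η := by
              apply le_antisymm
              · have := infDist_le_dist_of_mem hx (x := x + η • wbar)
                rwa [hd] at this
              · by_contra hlt
                obtain ⟨q, hq, hdq⟩ := (infDist_lt_iff hQne).1 (not_le.1 hlt)
                exact absurd hdq (not_lt.2 (hge q hq))
            rw [hd, hinf]
          -- contradiction
          have huwbar : ⟪u, wbar⟫ ≤ 0 := hu wbar hwbarN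
          have hglim : Tendsto (fun j => ε (φ (ψ j)) * K + ⟪u, w (ψ j)⟫) atTop
              (𝓝 (0 * K + ⟪u, wbar⟫)) :=
            (hεφψ.mul_const K).add (Tendsto.inner tendsto_const_nhds hwlim)
          have hcle : c ≤ 0 * K + ⟪u, wbar⟫ :=
            le_of_tendsto_of_tendsto' tendsto_const_nhds hglim (fun j => hchain (ψ j))
          rw [zero_mul, zero_add] at hcle
          linarith
      -- build the tangent cone witness
      refine ⟨fun n => (ε n)⁻¹ • (y n - x), ε, hεpos, hεlim, ?_, ?_⟩
      · rw [tendsto_iff_norm_sub_tendsto_zero]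
        apply squeeze_zero (fun n => norm_nonneg _)
          (g := fun n => (ε n)⁻¹ * r n) ?_ hkey
        intro n
        have he : (ε n)⁻¹ • (y n - z n) = (ε n)⁻¹ • (y n - x) - u := by
          have h9 : y n - z n = (y n - x) - ε n • u := by
            simp only [hzdef]; abel
          rw [h9, smul_sub, smul_smul, inv_mul_cancel₀ (hεpos n).ne', one_smul]
        rw [← he, norm_smul, Real.norm_eq_abs, abs_of_pos (inv_pos.2 (hεpos n))]
        have : ‖y n - z n‖ = r n := by
          rw [← dist_eq_norm, dist_comm, ← hyd n]
        rw [this]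
      · intro n
        have : x + ε n • (ε n)⁻¹ • (y n - x) = y n := by
          rw [smul_smul, mul_inv_cancel₀ (hεpos n).ne', one_smul]
          abel
        rw [this]
        exact hyQ n
  refine ⟨key, ?_, ?_⟩
  · rw [key]
    have hset : {u : EuclideanSpace ℝ (Fin d) | ∀ v ∈ proxNormalCone Q x, ⟪u, v⟫ ≤ 0} =
        ⋂ v ∈ proxNormalCone Q x, {u | ⟪u, v⟫ ≤ 0} := by
      ext u; simp
    rw [hset]
    exact isClosed_biInter fun v _ =>
      isClosed_le (Continuous.inner continuous_id continuous_const) continuous_const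
  · rw [key]
    intro a ha b hb s t hs ht _ v hv
    have e : ⟪s • a + t • b, v⟫ = s * ⟪a, v⟫ + t * ⟪b, v⟫ := by
      rw [inner_add_left, real_inner_smul_left, real_inner_smul_left]
    show ⟪s • a + t • b, v⟫ ≤ 0
    rw [e]
    have h1 := ha v hv
    have h2 := hb v hv
    nlinarith
end
end

section
/- Let g_1, …, g_p be C¹ functions on ℝ^d with α ≤ |∇g_i| ≤ β and |∇g_i(x) − ∇g_i(y)| ≤ M|x−y| (Lipschitz gradients), and let Q = ∩_i {g_i ≥ 0}. Suppose the reverse triangle inequality (R₀) holds on Q ∩ B̄(0,2L): for all q ∈ Q ∩ B̄(0,2L) and all λ_i ≥ 0, Σ_{i ∈ I(q)} λ_i|∇g_i(q)| ≤ γ |Σ_{i ∈ I(q)} λ_i ∇g_i(q)|, where I(q) = {i : g_i(q) = 0}. Then there exist ρ > 0 and γ' > 0 such that the inequality (R_ρ) holds on B̄(0,2L): for all q ∈ Q ∩ B̄(0,2L) and all λ_i ≥ 0, Σ_{i ∈ I_ρ(q)} λ_i|∇g_i(q)| ≤ γ' |Σ_{i ∈ I_ρ(q)} λ_i ∇g_i(q)|,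 where I_ρ(q) = {i : g_i(q) ≤ ρ}. -/
open Metric Set Filter
open scoped Classical

noncomputable section

/-- Lemma `lem:r0rrho`: if the reverse triangle inequality `(R₀)` (over the active
constraints `I(q) = {i : g_i(q) = 0}`) holds on `Q ∩ B̄(0,2L)`, then for some `ρ > 0`
and `γ' > 0` the inequality `(R_ρ)` (over `I_ρ(q) = {i : g_i(q) ≤ ρ}`) holds there. -/
theorem stmt_9 {d p : ℕ} (L α β M γ : ℝ) (hL : 0 < L) (hα : 0 < α) (hβ : 0 < β)
    (hM : 0 < M) (hγ : 0 < γ)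
    (g : Fin p → EuclideanSpace ℝ (Fin d) → ℝ)
    (hC1 : ∀ i, ContDiff ℝ 1 (g i))
    (hgrad : ∀ i x, α ≤ ‖gradient (g i) x‖ ∧ ‖gradient (g i) x‖ ≤ β)
    (hlip : ∀ i x y, ‖gradient (g i) x - gradient (g i) y‖ ≤ M * ‖x - y‖)
    (Q : Set (EuclideanSpace ℝ (Fin d))) (hQ : Q = ⋂ i, {x | 0 ≤ g i x})
    (hR0 : ∀ q ∈ Q ∩ Metric.closedBall 0 (2 * L), ∀ lam : Fin p → ℝ,
      (∀ i, 0 ≤ lam i) →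
      ∑ i ∈ Finset.univ.filter (fun i => g i q = 0), lam i * ‖gradient (g i) q‖ ≤
        γ * ‖∑ i ∈ Finset.univ.filter (fun i => g i q = 0), lam i • gradient (g i) q‖) :
    ∃ ρ > (0 : ℝ), ∃ γ' > (0 : ℝ),
      ∀ q ∈ Q ∩ Metric.closedBall 0 (2 * L), ∀ lam : Fin p → ℝ,
        (∀ i, 0 ≤ lam i) →
        ∑ i ∈ Finset.univ.filter (fun i => g i q ≤ ρ), lam i * ‖gradient (g i) q‖ ≤
          γ' * ‖∑ i ∈ Finset.univ.filter (fun i => g i q ≤ ρ), lam i • gradient (g i) q‖ := by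
  classical
  have hgc : ∀ i, Continuous (fun x : EuclideanSpace ℝ (Fin d) => gradient (g i) x) := fun i =>
    (InnerProductSpace.toDual ℝ _).symm.continuous.comp ((hC1 i).continuous_fderiv one_ne_zero)
  set c : ℝ := α / (2 * γ) with hc
  have hcpos : 0 < c := by positivity
  set f : EuclideanSpace ℝ (Fin d) × (Fin p → ℝ) → ℝ :=
    fun x => ‖∑ i, x.2 i • gradient (g i) x.1‖ with hf
  have hfc : Continuous f := by
    apply Continuous.norm
    exact continuous_finset_sum _ fun i _ =>
      ((continuous_apply i).comp continuous_snd).smul ((hgc i).comp continuous_fst)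
  have hQclosed : IsClosed Q := by
    rw [hQ]
    exact isClosed_iInter fun i => isClosed_le continuous_const (hC1 i).continuous
  set K : Set (EuclideanSpace ℝ (Fin d) × (Fin p → ℝ)) :=
    Metric.closedBall 0 (2 * L) ×ˢ stdSimplex ℝ (Fin p) with hK
  have hKc : IsCompact K := (isCompact_closedBall _ _).prod (isCompact_stdSimplex _ _)
  set t : ℕ → Set (EuclideanSpace ℝ (Fin d) × (Fin p → ℝ)) := fun n =>
    {x | x.1 ∈ Q} ∩ ((⋂ i, ({x | x.2 i = 0} ∪ {x | g i x.1 ≤ 1 / (n + 1)})) ∩ {x | f x ≤ c})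
    with ht
  have htc : ∀ n, IsClosed (t n) := by
    intro n
    refine (hQclosed.preimage continuous_fst).inter (IsClosed.inter ?_
      (isClosed_le hfc continuous_const))
    exact isClosed_iInter fun i =>
      ((isClosed_eq ((continuous_apply i).comp continuous_snd) continuous_const).union
        (isClosed_le ((hC1 i).continuous.comp continuous_fst) continuous_const))
  have htmono : ∀ m n : ℕ, m ≤ n → t n ⊆ t m := by
    intro m n hmn x hx
    obtain ⟨h1, h2, h3⟩ := hx
    refine ⟨h1, mem_iInter.2 fun i => ?_, h3⟩
    rcases mem_iInter.1 h2 i with h | h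
    · exact Or.inl h
    · refine Or.inr (le_trans (show g i x.1 ≤ 1 / (n + 1) from h) ?_)
      apply one_div_le_one_div_of_le (by positivity)
      have : (m : ℝ) ≤ n := Nat.cast_le.2 hmn
      linarith
  have hdt : Directed (· ⊇ ·) t := fun m n =>
    ⟨max m n, htmono m _ (le_max_left _ _), htmono n _ (le_max_right _ _)⟩
  have hempty : K ∩ ⋂ n, t n = ∅ := by
    rw [Set.eq_empty_iff_forall_notMem]
    rintro ⟨q, lam⟩ ⟨hKmem, hall⟩
    simp only [mem_iInter] at hall
    obtain ⟨hqball, hlamS⟩ := hKmem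
    have hlam0 : ∀ i, 0 ≤ lam i := hlamS.1
    have hlamsum : ∑ i, lam i = 1 := hlamS.2
    have hQmem : q ∈ Q := (hall 0).1
    have hsupp : ∀ i, lam i ≠ 0 → g i q = 0 := by
      intro i hi
      have hle : g i q ≤ 0 := by
        apply ge_of_tendsto' tendsto_one_div_add_atTop_nhds_zero_nat
        intro n
        rcases mem_iInter.1 (hall n).2.1 i with h | h
        · exact absurd h hi
        · exact h
      have hge : 0 ≤ g i q := by
        rw [hQ] at hQmem
        exact mem_iInter.1 hQmem i
      linarith
    have hfle : f (q, lam) ≤ c := (hall 0).2.2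
    have hR := hR0 q ⟨hQmem, hqball⟩ lam hlam0
    set F := Finset.univ.filter (fun i => g i q = 0) with hF
    have hoff : ∀ i ∈ Finset.univ, i ∉ F → lam i = 0 := by
      intro i _ hi
      by_contra hne
      exact hi (Finset.mem_filter.2 ⟨Finset.mem_univ _, hsupp i hne⟩)
    have hsum1 : ∑ i ∈ F, lam i = 1 := by
      rw [← hlamsum]
      exact Finset.sum_subset (Finset.filter_subset _ _) hoff
    have hvec : ∑ i ∈ F, lam i • gradient (g i) q = ∑ i, lam i • gradient (g i) q := by
      apply Finset.sum_subset (Finset.filter_subset _ _)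
      intro i hi hni
      rw [hoff i hi hni, zero_smul]
    have hlb : α ≤ ∑ i ∈ F, lam i * ‖gradient (g i) q‖ := by
      calc α = ∑ i ∈ F, lam i * α := by rw [← Finset.sum_mul, hsum1, one_mul]
        _ ≤ ∑ i ∈ F, lam i * ‖gradient (g i) q‖ :=
          Finset.sum_le_sum fun i _ => mul_le_mul_of_nonneg_left (hgrad i q).1 (hlam0 i)
    have hfin : α ≤ γ * f (q, lam) := by
      calc α ≤ ∑ i ∈ F, lam i * ‖gradient (g i) q‖ := hlb
        _ ≤ γ * ‖∑ i ∈ F, lam i • gradient (g i) q‖ := hR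
        _ = γ * f (q, lam) := by rw [hf]; simp only; rw [hvec]
    have hcc : α ≤ γ * c := le_trans hfin (mul_le_mul_of_nonneg_left hfle (le_of_lt hγ))
    rw [hc] at hcc
    have hcontr : γ * (α / (2 * γ)) = α / 2 := by field_simp
    rw [hcontr] at hcc
    linarith
  obtain ⟨n, hn⟩ := hKc.elim_directed_family_closed t htc hempty hdt
  refine ⟨1 / (n + 1), by positivity, 2 * β * γ / α, by positivity, ?_⟩
  rintro q ⟨hqQ, hqball⟩ lam hlam0
  set ρ : ℝ := 1 / (n + 1) with hρ
  set S := Finset.univ.filter (fun i => g i q ≤ ρ) with hS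
  set s : ℝ := ∑ i ∈ S, lam i with hs
  have hs0 : 0 ≤ s := Finset.sum_nonneg fun i _ => hlam0 i
  rcases eq_or_lt_of_le hs0 with hseq | hspos
  · have hall0 : ∀ i ∈ S, lam i = 0 :=
      (Finset.sum_eq_zero_iff_of_nonneg fun i _ => hlam0 i).1 hseq.symm
    have hz : ∑ i ∈ S, lam i * ‖gradient (g i) q‖ = 0 :=
      Finset.sum_eq_zero fun i hi => by rw [hall0 i hi, zero_mul]
    rw [hz]
    positivity
  · set μ : Fin p → ℝ := fun i => if g i q ≤ ρ then lam i / s else 0 with hμ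
    have hμ0 : ∀ i, 0 ≤ μ i := by
      intro i
      simp only [hμ]
      split
      · exact div_nonneg (hlam0 i) hs0
      · exact le_refl 0
    have hμsum : ∑ i, μ i = 1 := by
      simp only [hμ]
      rw [← Finset.sum_filter, ← hS, ← Finset.sum_div, ← hs, div_self (ne_of_gt hspos)]
    have hμmem : (q, μ) ∈ K := ⟨hqball, hμ0, hμsum⟩
    have hnotin : (q, μ) ∉ t n := by
      intro hmem
      have hx : (q, μ) ∈ K ∩ t n := ⟨hμmem, hmem⟩
      rw [hn] at hx
      exact hx
    have hsecond : ((q, μ) : EuclideanSpace ℝ (Fin d) × (Fin p → ℝ)) ∈ ⋂ i,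
        ({x : EuclideanSpace ℝ (Fin d) × (Fin p → ℝ) | x.2 i = 0} ∪
          {x | g i x.1 ≤ 1 / (n + 1)}) := by
      apply mem_iInter.2
      intro i
      by_cases hgi : g i q ≤ ρ
      · exact Or.inr hgi
      · refine Or.inl ?_
        show μ i = 0
        simp only [hμ]
        rw [if_neg hgi]
    have hfgt : c < f (q, μ) := by
      by_contra hle
      push_neg at hle
      exact hnotin ⟨hqQ, hsecond, hle⟩
    have hvec2 : ∑ i, μ i • gradient (g i) q = s⁻¹ • ∑ i ∈ S, lam i • gradient (g i) q := by
      rw [Finset.smul_sum, hS, Finset.sum_filter]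
      apply Finset.sum_congr rfl
      intro i _
      simp only [hμ]
      split_ifs with h
      · rw [div_eq_inv_mul, mul_smul]
      · rw [zero_smul]
    have hnorm : ‖∑ i ∈ S, lam i • gradient (g i) q‖ = s * f (q, μ) := by
      simp only [hf, hvec2, norm_smul, norm_inv, Real.norm_eq_abs, abs_of_pos hspos]
      rw [← mul_assoc, mul_inv_cancel₀ (ne_of_gt hspos), one_mul]
    have hnormge : s * c ≤ ‖∑ i ∈ S, lam i • gradient (g i) q‖ := by
      rw [hnorm]
      exact mul_le_mul_of_nonneg_left (le_of_lt hfgt) hs0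
    have hLHS : ∑ i ∈ S, lam i * ‖gradient (g i) q‖ ≤ β * s := by
      calc ∑ i ∈ S, lam i * ‖gradient (g i) q‖ ≤ ∑ i ∈ S, lam i * β :=
            Finset.sum_le_sum fun i _ => mul_le_mul_of_nonneg_left (hgrad i q).2 (hlam0 i)
        _ = β * s := by rw [← Finset.sum_mul, hs]; ring
    have hkey : β * s = (2 * β * γ / α) * (s * c) := by
      rw [hc]; field_simp
    calc ∑ i ∈ S, lam i * ‖gradient (g i) q‖ ≤ β * s := hLHS
      _ = (2 * β * γ / α) * (s * c) := hkey
      _ ≤ (2 * β * γ / α) * ‖∑ i ∈ S, lam i • gradient (g i) q‖ :=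
          mul_le_mul_of_nonneg_left hnormge (by positivity)
end
end

section
/- Let Q ⊂ ℝ^d be closed and let K ⊂ ℝ^d be compact. Suppose g_i (i = 1,…,p) are C¹ with |∇g_i| ≤ β on Q ∩ K and that for every q ∈ Q ∩ K the family (∇g_i(q))_{i ∈ I(q)} of gradients of active constraints is linearly independent, where I(q) = {i : g_i(q) = 0} and Q = ∩_i {g_i ≥ 0}. Then the reverse triangle inequality (R₀) holds on Q ∩ K: there exists γ > 0 such that for all q ∈ Q ∩ K and all nonnegative reals λ_i, Σ_{i ∈ I(q)} λ_i |∇g_i(q)| ≤ γ |Σ_{i ∈ I(q)} λ_i ∇g_i(q)|. -/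
open Metric Set
open scoped Classical

noncomputable section

/-- Remark `rem:indR0`: if on a compact `K` the gradients of active constraints are
linearly independent at every `q ∈ Q ∩ K`, the reverse triangle inequality `(R₀)` holds
on `Q ∩ K` with a uniform constant `γ > 0`. -/
theorem stmt_10 {d p : ℕ} (β : ℝ) (hβ : 0 < β)
    (g : Fin p → EuclideanSpace ℝ (Fin d) → ℝ)
    (Q : Set (EuclideanSpace ℝ (Fin d))) (hQ : Q = ⋂ i, {x | 0 ≤ g i x})
    (hQc : IsClosed Q)
    (K : Set (EuclideanSpace ℝ (Fin d))) (hK : IsCompact K)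
    (hC1 : ∀ i, ContDiff ℝ 1 (g i))
    (hgrad : ∀ i, ∀ q ∈ Q ∩ K, ‖gradient (g i) q‖ ≤ β)
    (hind : ∀ q ∈ Q ∩ K,
      LinearIndependent ℝ (fun i : {i : Fin p // g i q = 0} => gradient (g i.1) q)) :
    ∃ γ > (0 : ℝ), ∀ q ∈ Q ∩ K, ∀ lam : Fin p → ℝ, (∀ i, 0 ≤ lam i) →
      ∑ i ∈ Finset.univ.filter (fun i => g i q = 0), lam i * ‖gradient (g i) q‖ ≤
        γ * ‖∑ i ∈ Finset.univ.filter (fun i => g i q = 0), lam i • gradient (g i) q‖ := by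
  classical
  -- continuity of the gradients
  have hgc : ∀ i, Continuous (fun q => gradient (g i) q) := by
    intro i
    have h1 : Continuous (fun q => fderiv ℝ (g i) q) :=
      ((hC1 i).continuous_fderiv one_ne_zero)
    exact (InnerProductSpace.toDual ℝ
      (EuclideanSpace ℝ (Fin d))).symm.continuous.comp h1
  have hQK : IsCompact (Q ∩ K) := hK.inter_left hQc
  -- key lemma for a fixed active set S
  have key : ∀ S : Finset (Fin p), ∃ γ > (0 : ℝ), ∀ q ∈ Q ∩ K,
      (∀ i ∈ S, g i q = 0) → ∀ lam : Fin p → ℝ, (∀ i, 0 ≤ lam i) →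
      ∑ i ∈ S, lam i * ‖gradient (g i) q‖ ≤
        γ * ‖∑ i ∈ S, lam i • gradient (g i) q‖ := by
    intro S
    by_cases hS : S.Nonempty
    · by_cases hCS : ∃ q ∈ Q ∩ K, ∀ i ∈ S, g i q = 0
      · -- the compact set of points where all constraints in S are active
        set C : Set (EuclideanSpace ℝ (Fin d)) :=
          (Q ∩ K) ∩ {q | ∀ i ∈ S, g i q = 0} with hCdef
        have hCclosed : IsClosed {q : EuclideanSpace ℝ (Fin d) | ∀ i ∈ S, g i q = 0} := by
          have : {q : EuclideanSpace ℝ (Fin d) | ∀ i ∈ S, g i q = 0} =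
              ⋂ i ∈ S, {q | g i q = 0} := by
            ext x; simp
          rw [this]
          exact isClosed_biInter fun i _ => isClosed_eq (hC1 i).continuous continuous_const
        have hCcomp : IsCompact C := hQK.inter_right hCclosed
        -- the compact simplex of normalized coefficients
        set Δ : Set (Fin p → ℝ) :=
          {l | (∀ i, l i ∈ Set.Icc (0:ℝ) 1) ∧ ∑ i ∈ S, l i = 1} with hΔdef
        have hΔcomp : IsCompact Δ := by
          have hΔeq : Δ = (Set.pi Set.univ fun _ : Fin p => Set.Icc (0:ℝ) 1) ∩
              {l | ∑ i ∈ S, l i = 1} := by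
            ext l
            simp only [hΔdef, Set.mem_setOf_eq, Set.mem_inter_iff, Set.mem_pi,
              Set.mem_univ, true_implies, Set.mem_Icc]
          rw [hΔeq]
          exact (isCompact_univ_pi fun _ => isCompact_Icc).inter_right
            (isClosed_eq (continuous_finset_sum S fun i _ => continuous_apply i)
              continuous_const)
        set T : Set ((EuclideanSpace ℝ (Fin d)) × (Fin p → ℝ)) := C ×ˢ Δ with hTdef
        have hTcomp : IsCompact T := hCcomp.prod hΔcomp
        obtain ⟨i0, hi0⟩ := hS
        have hTne : T.Nonempty := by
          obtain ⟨q0, hq0, hq0act⟩ := hCS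
          refine ⟨(q0, fun j => if j = i0 then (1:ℝ) else 0), ⟨⟨hq0, hq0act⟩, ?_, ?_⟩⟩
          · intro i
            dsimp only
            constructor <;> split_ifs <;> norm_num
          · simp [Finset.sum_ite_eq' S i0 (fun _ => (1:ℝ)), hi0]
        set h : (EuclideanSpace ℝ (Fin d)) × (Fin p → ℝ) → ℝ :=
          fun x => ‖∑ i ∈ S, x.2 i • gradient (g i) x.1‖ with hhdef
        have hhcont : Continuous h :=
          (continuous_finset_sum S fun i _ =>
            ((continuous_apply i).comp continuous_snd).smul ((hgc i).comp continuous_fst)).norm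
        obtain ⟨x0, hx0T, hx0min⟩ := hTcomp.exists_isMinOn hTne hhcont.continuousOn
        set c : ℝ := h x0 with hcdef
        have hcpos : 0 < c := by
          rcases hx0T with ⟨hx0C, hx0Δ⟩
          have hq0mem : x0.1 ∈ Q ∩ K := hx0C.1
          have hq0act : ∀ i ∈ S, g i x0.1 = 0 := hx0C.2
          rw [hcdef, hhdef]
          simp only [norm_pos_iff]
          intro hsum0
          · -- transfer to coefficients over the active subtype
            set P : Fin p → Prop := fun i => g i x0.1 = 0 with hPdef
            set cf : {i : Fin p // g i x0.1 = 0} → ℝ :=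
              fun j => if j.1 ∈ S then x0.2 j.1 else 0 with hcfdef
            have hsum' : ∑ j : {i : Fin p // g i x0.1 = 0},
                cf j • gradient (g j.1) x0.1 = 0 := by
              have h1 : ∑ i ∈ Finset.univ.filter (fun i => g i x0.1 = 0),
                  (if i ∈ S then x0.2 i • gradient (g i) x0.1 else 0) =
                  ∑ j : {i : Fin p // g i x0.1 = 0},
                    (if j.1 ∈ S then x0.2 j.1 • gradient (g j.1) x0.1 else 0) :=
                Finset.sum_subtype _ (by simp) _
              have h2 : ∑ i ∈ Finset.univ.filter (fun i => g i x0.1 = 0),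
                  (if i ∈ S then x0.2 i • gradient (g i) x0.1 else 0) =
                  ∑ i ∈ S, x0.2 i • gradient (g i) x0.1 := by
                rw [Finset.sum_ite_mem]
                congr 1
                rw [Finset.inter_eq_right]
                intro i hi
                simp [hq0act i hi]
              calc ∑ j : {i : Fin p // g i x0.1 = 0}, cf j • gradient (g j.1) x0.1
                  = ∑ j : {i : Fin p // g i x0.1 = 0},
                    (if j.1 ∈ S then x0.2 j.1 • gradient (g j.1) x0.1 else 0) := by
                    apply Finset.sum_congr rfl
                    intro j _
                    simp only [hcfdef]
                    split_ifs <;> simp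
                _ = ∑ i ∈ S, x0.2 i • gradient (g i) x0.1 := by rw [← h1, h2]
                _ = 0 := hsum0
            have hli := hind x0.1 hq0mem
            have hzero := Fintype.linearIndependent_iff.mp hli cf hsum'
            have : ∑ i ∈ S, x0.2 i = 0 := by
              apply Finset.sum_eq_zero
              intro i hi
              have := hzero ⟨i, hq0act i hi⟩
              simpa [hcfdef, hi] using this
            rw [hx0Δ.2] at this
            norm_num at this
        refine ⟨β / c, div_pos hβ hcpos, ?_⟩
        intro q hq hact lam hlam
        set t : ℝ := ∑ i ∈ S, lam i with htdef
        rcases eq_or_lt_of_le (Finset.sum_nonneg fun i _ => hlam i) with ht0 | htpos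
        · -- all lam i = 0 on S
          have hall : ∀ i ∈ S, lam i = 0 :=
            (Finset.sum_eq_zero_iff_of_nonneg fun i _ => hlam i).mp ht0.symm
          have hL : ∑ i ∈ S, lam i * ‖gradient (g i) q‖ = 0 :=
            Finset.sum_eq_zero fun i hi => by rw [hall i hi, zero_mul]
          rw [hL]
          positivity
        · set l : Fin p → ℝ := fun i => if i ∈ S then lam i / t else 0 with hldef
          have hlmem : (q, l) ∈ T := by
            refine ⟨⟨hq, hact⟩, ?_, ?_⟩
            · intro i
              simp only [hldef]
              split_ifs with hi
              · constructor
                · exact div_nonneg (hlam i) htpos.le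
                · rw [div_le_one htpos]
                  exact Finset.single_le_sum (fun j _ => hlam j) hi
              · norm_num
            · simp only [hldef]
              rw [Finset.sum_congr rfl (fun i hi => if_pos hi), ← Finset.sum_div,
                ← htdef, div_self htpos.ne']
          have hmin : c ≤ h (q, l) := hx0min hlmem
          -- rescale
          have hscale : ∑ i ∈ S, lam i • gradient (g i) q =
              t • ∑ i ∈ S, l i • gradient (g i) q := by
            rw [Finset.smul_sum]
            apply Finset.sum_congr rfl
            intro i hi
            rw [smul_smul]
            congr 1
            simp only [hldef, if_pos hi]
            field_simp
            exact (mul_div_cancel_right₀ (lam i) htpos.ne').symm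
          have hnorm : ‖∑ i ∈ S, lam i • gradient (g i) q‖ =
              t * ‖∑ i ∈ S, l i • gradient (g i) q‖ := by
            rw [hscale, norm_smul, Real.norm_eq_abs, abs_of_pos htpos]
          have hLHS : ∑ i ∈ S, lam i * ‖gradient (g i) q‖ ≤ β * t := by
            calc ∑ i ∈ S, lam i * ‖gradient (g i) q‖
                ≤ ∑ i ∈ S, lam i * β :=
                  Finset.sum_le_sum fun i _ =>
                    mul_le_mul_of_nonneg_left (hgrad i q hq) (hlam i)
              _ = β * t := by rw [← Finset.sum_mul, ← htdef, mul_comm]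
          have hRHS : t * c ≤ ‖∑ i ∈ S, lam i • gradient (g i) q‖ := by
            rw [hnorm]
            exact mul_le_mul_of_nonneg_left hmin htpos.le
          calc ∑ i ∈ S, lam i * ‖gradient (g i) q‖ ≤ β * t := hLHS
            _ = (β / c) * (t * c) := by field_simp
            _ ≤ (β / c) * ‖∑ i ∈ S, lam i • gradient (g i) q‖ :=
                mul_le_mul_of_nonneg_left hRHS (div_pos hβ hcpos).le
      · -- no point where S is active: vacuous
        exact ⟨1, one_pos, fun q hq hact => absurd ⟨q, hq, hact⟩ hCS⟩
    · -- S empty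
      rw [Finset.not_nonempty_iff_eq_empty] at hS
      subst hS
      exact ⟨1, one_pos, fun q _ _ lam _ => by simp⟩
  choose γf hγpos hγ using key
  refine ⟨∑ S : Finset (Fin p), γf S, Finset.sum_pos (fun S _ => hγpos S)
    Finset.univ_nonempty, ?_⟩
  intro q hq lam hlam
  set S := Finset.univ.filter (fun i => g i q = 0) with hSdef
  have h1 := hγ S q hq (fun i hi => (Finset.mem_filter.mp hi).2) lam hlam
  calc ∑ i ∈ S, lam i * ‖gradient (g i) q‖
      ≤ γf S * ‖∑ i ∈ S, lam i • gradient (g i) q‖ := h1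
    _ ≤ (∑ S' : Finset (Fin p), γf S') * ‖∑ i ∈ S, lam i • gradient (g i) q‖ :=
        mul_le_mul_of_nonneg_right
          (Finset.single_le_sum (fun S' _ => (hγpos S').le) (Finset.mem_univ S))
          (norm_nonneg _)
end
end

section
/- Projection decrease estimate for balls inside prox-regular sets: Let D ⊂ ℝ^d be an η̃-prox-regular set (η̃ > 0) and suppose the closed ball B̄(y, δ/2) is contained in D, where δ > 0. Let x₀ ∈ ℝ^d and x₁ ∈ P_D(x₀) with |x₁ − y| ≤ R, |x₀ − x₁| ≤ R, and assume (1/η̃)(δ/2 + R)² ≤ δ/2. Then |x₁ − x₀| ≤ (2/δ)(|x₀ − y|² − |x₁ − y|²). -/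
open scoped RealInnerProductSpace
open Metric Set Filter Topology

noncomputable section

/-- Projection decrease estimate (core of Lemma `lem:x1_moins_x0`): if the closed ball
`B̄(y, δ/2)` lies inside the `η̃`-prox-regular set `D`, `x₁ ∈ P_D(x₀)`, `‖x₁−y‖ ≤ R`,
`‖x₀−x₁‖ ≤ R` and `(1/η̃)(δ/2 + R)² ≤ δ/2`, then
`‖x₁ − x₀‖ ≤ (2/δ)(‖x₀ − y‖² − ‖x₁ − y‖²)`. -/
theorem stmt_15 {d : ℕ} (D : Set (EuclideanSpace ℝ (Fin d)))
    (ηt δ R : ℝ) (hηt : 0 < ηt) (hδ : 0 < δ) (hR : 0 ≤ R)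
    (hD : IsProxRegular ηt D) (hDc : IsClosed D)
    (y x₀ x₁ : EuclideanSpace ℝ (Fin d))
    (hball : Metric.closedBall y (δ / 2) ⊆ D)
    (hx₁ : x₁ ∈ projSet D x₀)
    (h1 : ‖x₁ - y‖ ≤ R) (h2 : ‖x₀ - x₁‖ ≤ R)
    (hcond : (1 / ηt) * (δ / 2 + R) ^ 2 ≤ δ / 2) :
    ‖x₁ - x₀‖ ≤ (2 / δ) * (‖x₀ - y‖ ^ 2 - ‖x₁ - y‖ ^ 2) := by
  by_cases hv : x₀ - x₁ = 0
  · have hx : x₀ = x₁ := sub_eq_zero.mp hv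
    subst hx
    simp
  set v := x₀ - x₁ with hvdef
  have hn : 0 < ‖v‖ := norm_pos_iff.mpr hv
  have hmem : v ∈ proxNormalCone D x₁ := by
    refine ⟨1, one_pos, ?_⟩
    have : x₁ + (1 : ℝ) • v = x₀ := by
      rw [one_smul, hvdef]; abel
    rw [this]; exact hx₁
  have hdisj := hD x₁ hx₁.1 v hmem hv
  set z := y + ((δ / 2) / ‖v‖) • v with hz
  have hzy : ‖z - y‖ = δ / 2 := by
    rw [hz, add_sub_cancel_left, norm_smul, Real.norm_of_nonneg (by positivity),
      div_mul_cancel₀ _ hn.ne']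
  have hzball : z ∈ Metric.closedBall y (δ / 2) := by
    rw [Metric.mem_closedBall, dist_eq_norm, hzy]
  have hzD : z ∈ D := hball hzball
  have hznb : z ∉ Metric.ball (x₁ + (ηt / ‖v‖) • v) ηt := fun h =>
    Set.eq_empty_iff_forall_notMem.mp hdisj z ⟨h, hzD⟩
  have hdist : ηt ≤ ‖z - (x₁ + (ηt / ‖v‖) • v)‖ := by
    simpa [Metric.mem_ball, dist_eq_norm, not_lt] using hznb
  -- expand the square
  have hexp : ‖z - (x₁ + (ηt / ‖v‖) • v)‖ ^ 2
      = ‖z - x₁‖ ^ 2 - 2 * ((ηt / ‖v‖) * ⟪z - x₁, v⟫) + ηt ^ 2 := by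
    have he : z - (x₁ + (ηt / ‖v‖) • v) = (z - x₁) - (ηt / ‖v‖) • v := by abel
    have hns : ‖(ηt / ‖v‖) • v‖ = ηt := by
      rw [norm_smul, Real.norm_of_nonneg (by positivity), div_mul_cancel₀ _ hn.ne']
    rw [he, norm_sub_sq_real, real_inner_smul_right, hns]
  have hsq : ηt ^ 2 ≤ ‖z - (x₁ + (ηt / ‖v‖) • v)‖ ^ 2 :=
    pow_le_pow_left₀ hηt.le hdist 2
  have key : 2 * ηt * ⟪z - x₁, v⟫ ≤ ‖v‖ * ‖z - x₁‖ ^ 2 := by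
    have h0 : 2 * ((ηt / ‖v‖) * ⟪z - x₁, v⟫) ≤ ‖z - x₁‖ ^ 2 := by
      nlinarith [hsq, hexp]
    have h3 := mul_le_mul_of_nonneg_right h0 hn.le
    have h4 : 2 * ηt * ⟪z - x₁, v⟫ = 2 * ((ηt / ‖v‖) * ⟪z - x₁, v⟫) * ‖v‖ := by
      field_simp
    rw [h4]
    calc 2 * ((ηt / ‖v‖) * ⟪z - x₁, v⟫) * ‖v‖ ≤ ‖z - x₁‖ ^ 2 * ‖v‖ := h3
      _ = ‖v‖ * ‖z - x₁‖ ^ 2 := mul_comm _ _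
  -- inner product decomposition
  have hinner : ⟪z - x₁, v⟫ = ⟪y - x₁, v⟫ + (δ / 2) * ‖v‖ := by
    have he : z - x₁ = (y - x₁) + ((δ / 2) / ‖v‖) • v := by rw [hz]; abel
    rw [he, inner_add_left, real_inner_smul_left, real_inner_self_eq_norm_sq]
    field_simp
  -- bound on ‖z - x₁‖
  have hza : ‖z - x₁‖ ≤ δ / 2 + R := by
    have he : z - x₁ = (z - y) + (y - x₁) := by abel
    calc ‖z - x₁‖ = ‖(z - y) + (y - x₁)‖ := by rw [he]
      _ ≤ ‖z - y‖ + ‖y - x₁‖ := norm_add_le _ _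
      _ ≤ δ / 2 + R := by
          rw [hzy]
          have : ‖y - x₁‖ = ‖x₁ - y‖ := norm_sub_rev _ _
          linarith [this ▸ h1]
  have hza2 : ‖z - x₁‖ ^ 2 ≤ (δ / 2 + R) ^ 2 :=
    pow_le_pow_left₀ (norm_nonneg _) hza 2
  -- combine: (δ/4)‖v‖ ≤ ⟪x₁ - y, v⟫
  have hcond' : (δ / 2 + R) ^ 2 ≤ ηt * (δ / 2) := by
    have h := mul_le_mul_of_nonneg_left hcond hηt.le
    have heq : ηt * (1 / ηt * (δ / 2 + R) ^ 2) = (δ / 2 + R) ^ 2 := by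
      field_simp
    rw [heq] at h
    exact h
  have hmain : (δ / 4) * ‖v‖ ≤ ⟪x₁ - y, v⟫ := by
    have hxy : x₁ - y = -(y - x₁) := by abel
    have hxy' : ⟪x₁ - y, v⟫ = -⟪y - x₁, v⟫ := by rw [hxy, inner_neg_left]
    have h4 : ‖v‖ * ‖z - x₁‖ ^ 2 ≤ ‖v‖ * (ηt * (δ / 2)) :=
      mul_le_mul_of_nonneg_left (hza2.trans hcond') hn.le
    have h5 : 2 * ηt * ⟪z - x₁, v⟫ ≤ ‖v‖ * (ηt * (δ / 2)) := key.trans h4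
    have h6 : ⟪z - x₁, v⟫ ≤ ‖v‖ * (δ / 4) := by nlinarith [h5, hηt]
    linarith [h6, hinner, hxy']
  -- final expansion
  have hfin : ‖x₀ - y‖ ^ 2 = ‖v‖ ^ 2 + 2 * ⟪v, x₁ - y⟫ + ‖x₁ - y‖ ^ 2 := by
    have he : x₀ - y = v + (x₁ - y) := by rw [hvdef]; abel
    rw [he, norm_add_sq_real]
  have hcomm : ⟪v, x₁ - y⟫ = ⟪x₁ - y, v⟫ := real_inner_comm _ _
  have hnv : ‖x₁ - x₀‖ = ‖v‖ := by rw [hvdef, norm_sub_rev]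
  rw [hnv]
  rw [div_mul_eq_mul_div, le_div_iff₀ hδ]
  linarith [hfin, hcomm, hmain, sq_nonneg ‖v‖]
end
end

section
/- Let Q ⊂ ℝ^d be an η-prox-regular set, let v¹, v² ∈ ℝ^d, α ∈ (0,1), ε > 0, and q ∈ ℝ^d be such that q + εv¹ ∈ Q and q + εv² ∈ Q. Set v = αv¹ + (1−α)v². Then d_Q(q + εv) ≤ (8M²/η) ε², where M = max(|v¹|, |v²|). -/
open scoped RealInnerProductSpace
open Metric Set Filter Topology

noncomputable section

set_option maxHeartbeats 1000000 in
/-- Quantitative approximate-convexity estimate (key step of Proposition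
`prop:coneconvex`): if `q + εv¹, q + εv² ∈ Q` with `Q` `η`-prox-regular and
`v = αv¹ + (1−α)v²`, `α ∈ (0,1)`, then `d_Q(q + εv) ≤ (8M²/η)ε²` with
`M = max(‖v¹‖, ‖v²‖)`. -/
theorem stmt_16 {d : ℕ} (Q : Set (EuclideanSpace ℝ (Fin d)))
    (η ε a : ℝ) (hη : 0 < η) (hε : 0 < ε) (ha : a ∈ Set.Ioo (0 : ℝ) 1)
    (hQ : IsProxRegular η Q) (hQc : IsClosed Q)
    (q v₁ v₂ : EuclideanSpace ℝ (Fin d))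
    (h1 : q + ε • v₁ ∈ Q) (h2 : q + ε • v₂ ∈ Q) :
    Metric.infDist (q + ε • (a • v₁ + (1 - a) • v₂)) Q ≤
      (8 * (max ‖v₁‖ ‖v₂‖) ^ 2 / η) * ε ^ 2 := by
  obtain ⟨ha0, ha1⟩ := ha
  set M := max ‖v₁‖ ‖v₂‖ with hM
  have hM1 : ‖v₁‖ ≤ M := le_max_left _ _
  have hM2 : ‖v₂‖ ≤ M := le_max_right _ _
  have hM0 : 0 ≤ M := le_trans (norm_nonneg _) hM1
  set p₁ := q + ε • v₁ with hp₁
  set p₂ := q + ε • v₂ with hp₂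
  set x := q + ε • (a • v₁ + (1 - a) • v₂) with hx
  have hQne : Q.Nonempty := ⟨_, h1⟩
  obtain ⟨z, hzQ, hzd⟩ := hQc.exists_infDist_eq_dist hQne x
  rw [hzd]
  by_cases hr0 : x = z
  · rw [hr0, dist_self]; positivity
  set r := dist x z with hrdef
  have hr : 0 < r := dist_pos.mpr hr0
  have hrn : ‖x - z‖ = r := (dist_eq_norm x z).symm
  have hn : (x - z) ∈ proxNormalCone Q z := by
    refine ⟨1, one_pos, ?_⟩
    simp only [projSet, one_smul, Set.mem_setOf_eq]
    constructor
    · exact hzQ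
    · rw [show z + (x - z) = x by abel]
      exact hzd.symm
  have hball := hQ z hzQ (x - z) hn (sub_ne_zero.mpr hr0)
  -- key hypomonotonicity inequality
  have key : ∀ p ∈ Q, ⟪p - z, x - z⟫ ≤ r / (2 * η) * ‖p - z‖ ^ 2 := by
    intro p hp
    have hnp : p ∉ Metric.ball (z + (η / ‖x - z‖) • (x - z)) η := by
      intro h
      have : p ∈ Metric.ball (z + (η / ‖x - z‖) • (x - z)) η ∩ Q := ⟨h, hp⟩
      rw [hball] at this
      exact this
    rw [Metric.mem_ball, not_lt, dist_eq_norm] at hnp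
    rw [hrn] at hnp
    set c := η / r with hc
    have hcpos : 0 < c := div_pos hη hr
    have hrw : p - (z + c • (x - z)) = (p - z) - c • (x - z) := by abel
    rw [hrw] at hnp
    have hexp : ‖(p - z) - c • (x - z)‖ ^ 2
        = ‖p - z‖ ^ 2 - 2 * c * ⟪p - z, x - z⟫ + c ^ 2 * r ^ 2 := by
      rw [norm_sub_sq_real, real_inner_smul_right, norm_smul, hrn]
      have : |c| = c := abs_of_pos hcpos
      rw [Real.norm_eq_abs, this]
      ring
    have hsq : η ^ 2 ≤ ‖(p - z) - c • (x - z)‖ ^ 2 := by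
      have h0 : (0:ℝ) ≤ η := le_of_lt hη
      nlinarith [norm_nonneg ((p - z) - c • (x - z))]
    rw [hexp] at hsq
    have hcr : c * r = η := by
      rw [hc]; field_simp
    have h2 : 2 * c * ⟪p - z, x - z⟫ ≤ ‖p - z‖ ^ 2 := by nlinarith
    rw [div_mul_eq_mul_div, le_div_iff₀ (by positivity)]
    have : ⟪p - z, x - z⟫ * (2 * η) = (2 * c * ⟪p - z, x - z⟫) * r := by
      rw [← hcr]; ring
    rw [this]
    nlinarith
  -- x - z decomposes as convex combination
  have hdec : x - z = a • (p₁ - z) + (1 - a) • (p₂ - z) := by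
    rw [hx, hp₁, hp₂]
    module
  have hsum : r ^ 2 = a * ⟪p₁ - z, x - z⟫ + (1 - a) * ⟪p₂ - z, x - z⟫ := by
    have : r ^ 2 = ⟪x - z, x - z⟫ := by rw [real_inner_self_eq_norm_sq, hrn]
    rw [this]
    nth_rewrite 1 [hdec]
    rw [inner_add_left, real_inner_smul_left, real_inner_smul_left]
  -- distance bounds
  have hd1 : ‖p₁ - x‖ ≤ 2 * M * ε := by
    have : p₁ - x = (ε * (1 - a)) • (v₁ - v₂) := by
      rw [hp₁, hx]; module
    rw [this, norm_smul, Real.norm_eq_abs, abs_of_pos (mul_pos hε (by linarith))]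
    have hv : ‖v₁ - v₂‖ ≤ 2 * M := by
      calc ‖v₁ - v₂‖ ≤ ‖v₁‖ + ‖v₂‖ := norm_sub_le _ _
      _ ≤ 2 * M := by linarith
    calc ε * (1 - a) * ‖v₁ - v₂‖ ≤ ε * 1 * (2 * M) := by
          apply mul_le_mul
          · nlinarith
          · exact hv
          · exact norm_nonneg _
          · positivity
      _ = 2 * M * ε := by ring
  have hd2 : ‖p₂ - x‖ ≤ 2 * M * ε := by
    have : p₂ - x = (ε * a) • (v₂ - v₁) := by
      rw [hp₂, hx]; module
    rw [this, norm_smul, Real.norm_eq_abs, abs_of_pos (mul_pos hε ha0)]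
    have hv : ‖v₂ - v₁‖ ≤ 2 * M := by
      calc ‖v₂ - v₁‖ ≤ ‖v₂‖ + ‖v₁‖ := norm_sub_le _ _
      _ ≤ 2 * M := by linarith
    calc ε * a * ‖v₂ - v₁‖ ≤ ε * 1 * (2 * M) := by
          apply mul_le_mul
          · nlinarith
          · exact hv
          · exact norm_nonneg _
          · positivity
      _ = 2 * M * ε := by ring
  have hrle : r ≤ 2 * M * ε := by
    calc r = Metric.infDist x Q := hzd.symm
      _ ≤ dist x p₁ := Metric.infDist_le_dist_of_mem h1
      _ = ‖p₁ - x‖ := by rw [dist_eq_norm, norm_sub_rev]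
      _ ≤ 2 * M * ε := hd1
  have hb1 : ‖p₁ - z‖ ≤ 4 * M * ε := by
    calc ‖p₁ - z‖ ≤ ‖p₁ - x‖ + ‖x - z‖ := by
          have : p₁ - z = (p₁ - x) + (x - z) := by abel
          rw [this]; exact norm_add_le _ _
      _ ≤ 2 * M * ε + r := by rw [hrn]; linarith
      _ ≤ 4 * M * ε := by linarith
  have hb2 : ‖p₂ - z‖ ≤ 4 * M * ε := by
    calc ‖p₂ - z‖ ≤ ‖p₂ - x‖ + ‖x - z‖ := by
          have : p₂ - z = (p₂ - x) + (x - z) := by abel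
          rw [this]; exact norm_add_le _ _
      _ ≤ 2 * M * ε + r := by rw [hrn]; linarith
      _ ≤ 4 * M * ε := by linarith
  have k1 := key p₁ h1
  have k2 := key p₂ h2
  -- combine
  have hr2 : r ^ 2 ≤ r / (2 * η) * (16 * M ^ 2 * ε ^ 2) := by
    have e1 : ‖p₁ - z‖ ^ 2 ≤ 16 * M ^ 2 * ε ^ 2 := by
      nlinarith [norm_nonneg (p₁ - z)]
    have e2 : ‖p₂ - z‖ ^ 2 ≤ 16 * M ^ 2 * ε ^ 2 := by
      nlinarith [norm_nonneg (p₂ - z)]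
    have hpos : 0 < r / (2 * η) := by positivity
    calc r ^ 2 = a * ⟪p₁ - z, x - z⟫ + (1 - a) * ⟪p₂ - z, x - z⟫ := hsum
      _ ≤ a * (r / (2 * η) * ‖p₁ - z‖ ^ 2) + (1 - a) * (r / (2 * η) * ‖p₂ - z‖ ^ 2) := by
          apply add_le_add
          · exact mul_le_mul_of_nonneg_left k1 (le_of_lt ha0)
          · exact mul_le_mul_of_nonneg_left k2 (by linarith)
      _ ≤ a * (r / (2 * η) * (16 * M ^ 2 * ε ^ 2))
            + (1 - a) * (r / (2 * η) * (16 * M ^ 2 * ε ^ 2)) := by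
          apply add_le_add
          · exact mul_le_mul_of_nonneg_left
              (mul_le_mul_of_nonneg_left e1 hpos.le) ha0.le
          · exact mul_le_mul_of_nonneg_left
              (mul_le_mul_of_nonneg_left e2 hpos.le) (by linarith)
      _ = r / (2 * η) * (16 * M ^ 2 * ε ^ 2) := by ring
  have hfin : r ≤ 8 * M ^ 2 * ε ^ 2 / η := by
    have h := hr2
    rw [div_mul_eq_mul_div, le_div_iff₀ (show (0:ℝ) < 2 * η by positivity)] at h
    have h3 : r * (2 * η) ≤ 16 * M ^ 2 * ε ^ 2 := by
      have h4 : r * (r * (2 * η)) ≤ r * (16 * M ^ 2 * ε ^ 2) := by nlinarith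
      exact (mul_le_mul_iff_right₀ hr).mp h4
    rw [le_div_iff₀ hη]
    nlinarith
  calc r ≤ 8 * M ^ 2 * ε ^ 2 / η := hfin
    _ = 8 * M ^ 2 / η * ε ^ 2 := by ring
end
end
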